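/- arXiv:1805.11608 — 8 statements merged into one kernel-verified Lean document; each statement's English description precedes it below -/
import Mathlib

section
/- Let (X, ≼) be a quasi-ordered set and let (x_β)_{β<α} and (y_γ)_{γ<δ} be increasing chains in (X, ≼) with (x_β)_{β<α} ≐ (y_γ)_{γ<δ}. Then there exists an increasing chain (y'_λ)_{λ<α'} with α' ≤ α, (y'_λ)_{λ<α'} ⊆ (y_γ)_{γ<δ}, and (y'_λ)_{λ<α'} ≐ (y_γ)_{γ<δ}. -/
universe u

/-- An increasing chain in a quasi-ordered set `(X, r)`: an ordinal `len` together with a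
family of elements of `X` indexed by the ordinals below `len`, such that `β < γ` implies
`x_β ≺ x_γ` (i.e. `x_β ≼ x_γ` and not `x_γ ≼ x_β`). -/
structure IncChain (X : Type u) (r : X → X → Prop) : Type (u + 1) where
  len : Ordinal.{u}
  val : (β : Ordinal.{u}) → β < len → X
  inc : ∀ (β γ : Ordinal.{u}) (hβ : β < len) (hγ : γ < len), β < γ →
    r (val β hβ) (val γ hγ) ∧ ¬ r (val γ hγ) (val β hβ)

namespace IncChain

variable {X : Type u} {r : X → X → Prop}

/-- The domination quasi-order `⊑` on increasing chains. -/
def Le (A B : IncChain X r) : Prop :=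
  ∀ (β : Ordinal.{u}) (hβ : β < A.len), ∃ (γ : Ordinal.{u}) (hγ : γ < B.len),
    r (A.val β hβ) (B.val γ hγ)

/-- The equivalence `≐` induced by `⊑`. -/
def Equiv (A B : IncChain X r) : Prop := A.Le B ∧ B.Le A

/-- `A ⊆ B`: every element of the chain `A` occurs in the chain `B`. -/
def Subset (A B : IncChain X r) : Prop :=
  ∀ (β : Ordinal.{u}) (hβ : β < A.len), ∃ (γ : Ordinal.{u}) (hγ : γ < B.len),
    B.val γ hγ = A.val β hβ

/-- `A` is cofinal in `B`. -/
def Cofinal (A B : IncChain X r) : Prop := A.Subset B ∧ B.Le A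

/-- The cofinality of a chain: the least ordinal indexing a chain cofinal in it. -/
noncomputable def cof (B : IncChain X r) : Ordinal.{u} :=
  sInf {α : Ordinal.{u} | ∃ A : IncChain X r, A.len = α ∧ A.Cofinal B}

/-- A maximal chain. -/
def Maximal (A : IncChain X r) : Prop := ∀ B : IncChain X r, A.Le B → B.Le A

end IncChain

/-- if `(x_β)_{β<α} ≐ (y_γ)_{γ<δ}`, then there is an increasing chain
`(y'_λ)_{λ<α'}` with `α' ≤ α`, `(y'_λ) ⊆ (y_γ)` and `(y'_λ) ≐ (y_γ)`. -/
theorem stmt0 {X : Type u} {r : X → X → Prop}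
    (hrefl : ∀ x, r x x) (htrans : ∀ a b c, r a b → r b c → r a c)
    (A B : IncChain X r) (h : A.Equiv B) :
    ∃ C : IncChain X r, C.len ≤ A.len ∧ C.Subset B ∧ C.Equiv B := by
  classical
  haveI iT : IsWellOrder A.len.ToType ((· < ·) : A.len.ToType → A.len.ToType → Prop) :=
    isWellOrder_lt
  have ht : ∀ t : A.len.ToType, Ordinal.typein (· < ·) t < A.len := fun t => by
    conv_rhs => rw [← Ordinal.type_toType A.len]
    exact Ordinal.typein_lt_type _ t
  set G : A.len.ToType → Ordinal.{u} :=
    fun t => sInf {γ | ∃ hγ : γ < B.len, r (A.val _ (ht t)) (B.val γ hγ)} with hG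
  have hGmem : ∀ t, G t ∈ {γ | ∃ hγ : γ < B.len, r (A.val _ (ht t)) (B.val γ hγ)} := by
    intro t
    apply csInf_mem
    obtain ⟨γ, hγ, hr⟩ := h.1 _ (ht t)
    exact ⟨γ, hγ, hr⟩
  have hGlt : ∀ t, G t < B.len := fun t => (hGmem t).1
  have hGr : ∀ t, r (A.val _ (ht t)) (B.val (G t) (hGlt t)) := fun t => (hGmem t).2
  have hmono : ∀ s t : A.len.ToType, s ≤ t → G s ≤ G t := by
    intro s t hst
    rcases eq_or_lt_of_le hst with rfl | hst
    · exact le_rfl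
    · apply csInf_le'
      refine ⟨hGlt t, htrans _ _ _ ?_ (hGr t)⟩
      exact (A.inc _ _ (ht s) (ht t) ((Ordinal.typein_lt_typein _).2 hst)).1
  haveI iN : IsWellOrder {t : A.len.ToType // ∀ s : A.len.ToType, s < t → G s < G t}
      ((· < ·) : _ → _ → Prop) := isWellOrder_lt
  set N := {t : A.len.ToType // ∀ s : A.len.ToType, s < t → G s < G t} with hN
  have hattain : ∀ t : A.len.ToType, ∃ n : N, G n.1 = G t := by
    intro t
    obtain ⟨t₀, ht₀, hmin⟩ := wellFounded_lt.has_min {s : A.len.ToType | G s = G t} ⟨t, rfl⟩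
    refine ⟨⟨t₀, fun s hs => ?_⟩, ht₀⟩
    rcases lt_or_eq_of_le (hmono s t₀ hs.le) with h' | h'
    · exact h'
    · exact absurd hs (hmin s (h'.trans ht₀))
  refine ⟨⟨Ordinal.type ((· < ·) : N → N → Prop),
      fun lam hlam => B.val (G (Ordinal.enum (· < ·) ⟨lam, hlam⟩ : N).1)
        (hGlt _), ?_⟩, ?_, ?_, ?_, ?_⟩
  · intro β γ hβ hγ hβγ
    have h12 : (Ordinal.enum (· < ·) ⟨β, hβ⟩ : N) < Ordinal.enum (· < ·) ⟨γ, hγ⟩ := by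
      have := @Ordinal.enum_lt_enum N (· < ·) _ ⟨β, hβ⟩ ⟨γ, hγ⟩
      exact this.2 (Subtype.mk_lt_mk.2 hβγ)
    exact B.inc _ _ (hGlt _) (hGlt _)
      ((Ordinal.enum (· < ·) ⟨γ, hγ⟩ : N).2 _ h12)
  · -- C.len ≤ A.len
    have emb : ((· < ·) : N → N → Prop) ↪r ((· < ·) : A.len.ToType → A.len.ToType → Prop) :=
      RelEmbedding.ofMonotone Subtype.val (fun a b hab => hab)
    calc Ordinal.type ((· < ·) : N → N → Prop)
        ≤ Ordinal.type ((· < ·) : A.len.ToType → A.len.ToType → Prop) := emb.ordinal_type_le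
      _ = A.len := Ordinal.type_toType A.len
  · intro lam hlam
    exact ⟨_, hGlt _, rfl⟩
  · intro lam hlam
    exact ⟨_, hGlt _, hrefl _⟩
  · intro δ hδ
    obtain ⟨β, hβ, hr⟩ := h.2 δ hδ
    have hβ' : β < Ordinal.type ((· < ·) : A.len.ToType → A.len.ToType → Prop) := by
      rwa [Ordinal.type_toType]
    have hty : Ordinal.typein (· < ·) (Ordinal.enum (· < ·) ⟨β, hβ'⟩ : A.len.ToType) = β :=
      Ordinal.typein_enum _ _
    have hrt : r (B.val δ hδ)
        (A.val _ (ht (Ordinal.enum (· < ·) ⟨β, hβ'⟩ : A.len.ToType))) := by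
      have heq : A.val (Ordinal.typein (· < ·) (Ordinal.enum (· < ·) ⟨β, hβ'⟩ : A.len.ToType))
          (ht _) = A.val β hβ := by
        congr 1
      rw [heq]; exact hr
    obtain ⟨n, hn⟩ := hattain (Ordinal.enum (· < ·) ⟨β, hβ'⟩ : A.len.ToType)
    refine ⟨Ordinal.typein ((· < ·) : N → N → Prop) n, Ordinal.typein_lt_type _ n, ?_⟩
    have henum : (Ordinal.enum ((· < ·) : N → N → Prop)
        ⟨Ordinal.typein (· < ·) n, Ordinal.typein_lt_type _ n⟩ : N) = n :=
      Ordinal.enum_typein _ n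
    have hval : ∀ (γ γ' : Ordinal.{u}) (hγ : γ < B.len) (hγ' : γ' < B.len), γ = γ' →
        B.val γ hγ = B.val γ' hγ' := by
      rintro γ _ hγ hγ' rfl
      rfl
    show r (B.val δ hδ)
      (B.val (G (Ordinal.enum ((· < ·) : N → N → Prop)
        ⟨Ordinal.typein (· < ·) n, Ordinal.typein_lt_type _ n⟩ : N).1) (hGlt _))
    have key : B.val (G (Ordinal.enum ((· < ·) : N → N → Prop)
        ⟨Ordinal.typein (· < ·) n, Ordinal.typein_lt_type _ n⟩ : N).1) (hGlt _)
        = B.val (G (Ordinal.enum (· < ·) ⟨β, hβ'⟩ : A.len.ToType)) (hGlt _) := by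
      apply hval
      rw [henum, hn]
    rw [key]
    exact htrans _ _ _ hrt (hGr _)
end

section
/- Let (X, ≼) be a quasi-ordered set. The following are equivalent: (1) every increasing chain of chains ((x^γ_β)_{β<α_γ})_{γ<δ} in IC(X, ≼) has an upper bound in IC(X, ≼); (2) every increasing chain of chains ((x^γ_β)_{β<α})_{γ<δ} in IC(X, ≼) in which all member chains are indexed by the same ordinal α and which satisfies α ≠ δ, cof((x^γ_β)_{β<α}) = α > 1 for every γ < δ, and cof(((x^γ_β)_{β<α})_{γ<δ}) = δ > 1 (this last cofinality computed in the quasi-order (IC(X, ≼), ⊑)), has an upper bound in IC(X, ≼). -/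
universe u

/-!
Only (2) ⇒ (1) needs an argument. The cofinality of a chain is the cofinality of the ordinal
indexing it, so after passing to a cofinal subchain of the chain of chains, and to a cofinal
subchain of least length of each member, the chain of chains has regular length `δ` and its
members have regular lengths. Along a subsequence these lengths are either constant or strictly
increasing. If they are constant, equal to `κ`, then `κ = 1` is trivial (the members are
singletons), `κ ≠ δ` is hypothesis (2), and `κ = δ` is settled by a diagonal chain. If they
increase, the `j`-th member is longer than the number of its predecessors, so some element of
the member with index `j + 1` lies strictly above all members with index `≤ j`; these elements
form the upper bound.
-/

universe v w

open Order Set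

namespace Ordinal

theorem lift_le_of_strictMonoOn {δ : Ordinal.{v}} {f : Ordinal.{v} → Ordinal.{max v w}}
    (hf : StrictMonoOn f (Iio δ)) {j : Ordinal.{v}} (hj : j < δ) : lift.{w} j ≤ f j := by
  induction j using WellFoundedLT.induction with
  | _ j ih =>
    refine le_of_forall_lt fun i hi => ?_
    obtain ⟨i, hij, rfl⟩ := lt_lift_iff.1 hi
    exact (ih i hij (hij.trans hj)).trans_lt (hf (hij.trans hj) hj hij)

theorem lift_card_lt_lift_cof_of_cof_ord_eq {δ : Ordinal.{v}} (hδ : δ.cof.ord = δ)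
    {o : Ordinal.{w}} (ho : lift.{v} o < lift.{w} δ) :
    Cardinal.lift.{v} o.card < Cardinal.lift.{w} δ.cof := by
  rwa [← hδ, Cardinal.lift_ord, Cardinal.lt_ord, ← lift_card] at ho

theorem exists_forall_lt_of_lift_card_lt_cof {δ : Ordinal.{v}} {o : Ordinal.{w}}
    (ho : Cardinal.lift.{v} o.card < Cardinal.lift.{w} δ.cof) (f : ∀ β < o, Ordinal.{v})
    (hf : ∀ β hβ, f β hβ < δ) : ∃ γ < δ, ∀ β hβ, f β hβ < γ := by
  have hsup := lift_iSup_add_one_lt_of_lt_cof (f := fun i : Iio o => f i.1 i.2) (a := δ) ?_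
    fun i => hf i.1 i.2
  · refine ⟨_, hsup, fun β hβ => (lt_add_one _).trans_le
      (le_ciSup (f := fun i : Iio o => f i.1 i.2 + 1) ?_ ⟨β, hβ⟩)⟩
    exact ⟨δ, by rintro _ ⟨i, rfl⟩; exact Order.add_one_le_of_lt (hf i.1 i.2)⟩
  · rw [Cardinal.mk_Iio_ordinal, ← lift_cof, Cardinal.lift_lift]
    simpa [Cardinal.lift_lift] using Cardinal.lift_strictMono.{max v w, w + 1} ho

theorem eq_zero_or_eq_one_or_isSuccLimit_of_cof_ord_eq {o : Ordinal} (h : o.cof.ord = o) :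
    o = 0 ∨ o = 1 ∨ IsSuccLimit o := by
  rcases zero_or_succ_or_isSuccLimit o with h0 | ⟨a, rfl⟩ | hlim
  · exact Or.inl h0
  · exact Or.inr (Or.inl (by rw [← h, succ_eq_add_one, cof_add_one, Cardinal.ord_one]))
  · exact Or.inr (Or.inr hlim)

theorem exists_seq_of_forall_exists {α : Type*} [Inhabited α] {δ : Ordinal.{v}}
    (R : ∀ j < δ, (∀ i < j, α) → α → Prop)
    (step : ∀ j (hj : j < δ) (h : ∀ i < j, α),
      (∀ i (hi : i < j), R i (hi.trans hj) (fun k hk => h k (hk.trans hi)) (h i hi)) →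
      ∃ x, R j hj h x) :
    ∃ f : Ordinal.{v} → α, ∀ j (hj : j < δ), R j hj (fun i _ => f i) (f j) := by
  classical
  let f : Ordinal.{v} → α := lt_wf.fix fun j h =>
    if hj : j < δ then (if hx : ∃ x, R j hj h x then hx.choose else default) else default
  refine ⟨f, fun j => ?_⟩
  induction j using WellFoundedLT.induction with
  | _ j ih =>
    intro hj
    have hx := step j hj (fun i _ => f i) fun i hi => ih i hi (hi.trans hj)
    rw [show f j = _ from lt_wf.fix_eq _ j, dif_pos hj, dif_pos hx]
    exact hx.choose_spec

theorem exists_seq_mem_of_cofinal {δ : Ordinal.{v}} (hδ : δ.cof.ord = δ)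
    {S : Set Ordinal.{v}} (hS : ∀ η < δ, ∃ γ ∈ S, η ≤ γ ∧ γ < δ)
    (bnd : Ordinal.{v} → Ordinal.{v}) (hbnd : ∀ γ < δ, bnd γ < δ) :
    ∃ e : Ordinal.{v} → Ordinal.{v},
      ∀ j < δ, e j < δ ∧ e j ∈ S ∧ ∀ i < j, e i < e j ∧ bnd (e i) ≤ e j := by
  refine exists_seq_of_forall_exists (α := Ordinal.{v}) (δ := δ)
    (fun j _ h γ => γ < δ ∧ γ ∈ S ∧ ∀ i (hi : i < j), h i hi < γ ∧ bnd (h i hi) ≤ γ)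
    fun j hj h hh => ?_
  obtain ⟨M, hM, hlt⟩ := exists_forall_lt_of_lift_card_lt_cof
    (lift_card_lt_lift_cof_of_cof_ord_eq hδ (lift_lt.2 hj))
    (fun i hi => max (h i hi) (bnd (h i hi))) fun i hi => max_lt (hh i hi).1 (hbnd _ (hh i hi).1)
  obtain ⟨γ, hγS, hMγ, hγ⟩ := hS M hM
  refine ⟨γ, hγ, hγS, fun i hi => ?_⟩
  have := (hlt i hi).trans_le hMγ
  exact ⟨(le_max_left _ _).trans_lt this, (le_max_right _ _).trans this.le⟩

theorem exists_subseq_const_or_strictMonoOn {δ : Ordinal.{v}} (hδ : δ.cof.ord = δ)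
    (hlim : IsSuccLimit δ) (c : Ordinal.{v} → Ordinal.{w}) :
    ∃ e : Ordinal.{v} → Ordinal.{v}, (∀ j < δ, e j < δ) ∧ StrictMonoOn e (Iio δ) ∧
      ((∃ κ, ∀ j < δ, c (e j) = κ) ∨
        (StrictMonoOn (c ∘ e) (Iio δ) ∧ ∀ j < δ, lift.{w} j < lift.{v} (c (e j)))) := by
  by_cases hconst : ∃ κ, ∀ η < δ, ∃ γ ∈ {γ | c γ = κ}, η ≤ γ ∧ γ < δ
  · obtain ⟨κ, hκ⟩ := hconst
    obtain ⟨e, he⟩ := exists_seq_mem_of_cofinal hδ hκ id fun _ h => h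
    exact ⟨e, fun j hj => (he j hj).1, fun i _ j hj hij => ((he j hj).2.2 i hij).1,
      Or.inl ⟨κ, fun j hj => (he j hj).2.1⟩⟩
  push Not at hconst
  choose bnd hbnd_lt hbnd using hconst
  -- the positions from which `c` never drops again
  have hS : ∀ η < δ, ∃ γ ∈ {γ | ∀ γ', γ ≤ γ' → γ' < δ → c γ ≤ c γ'}, η ≤ γ ∧ γ < δ := by
    intro η hη
    have hγ := Function.argminOn_mem c (Ico η δ) ⟨η, le_rfl, hη⟩
    exact ⟨_, fun γ' hγ' hγ'δ => Function.argminOn_le c (Ico η δ) ⟨hγ.1.trans hγ', hγ'δ⟩, hγ⟩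
  obtain ⟨e, he⟩ := exists_seq_mem_of_cofinal hδ hS (fun γ => bnd (c γ)) fun _ _ => hbnd_lt _
  have hce : StrictMonoOn (c ∘ e) (Iio δ) := by
    intro i hi j hj hij
    obtain ⟨hlt, hbnd_le⟩ := (he j hj).2.2 i hij
    refine ((he i hi).2.1 (e j) hlt.le (he j hj).1).lt_of_ne fun hc => ?_
    exact (hbnd _ (e j) hc.symm hbnd_le).not_gt (he j hj).1
  refine ⟨fun j => e (succ j), fun j hj => (he _ (hlim.succ_lt hj)).1,
    fun i hi j hj hij => ((he _ (hlim.succ_lt hj)).2.2 _ (succ_lt_succ hij)).1,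
    Or.inr ⟨fun i hi j hj hij => hce (hlim.succ_lt hi) (hlim.succ_lt hj) (succ_lt_succ hij),
      fun j hj => ?_⟩⟩
  calc lift.{w} j ≤ lift.{v} (c (e j)) :=
        lift_le_of_strictMonoOn (f := fun j => lift.{v} (c (e j)))
          (fun i hi j hj hij => lift_lt.2 (hce hi hj hij)) hj
    _ < lift.{v} (c (e (succ j))) := lift_lt.2 (hce hj (hlim.succ_lt hj) (lt_succ j))

end Ordinal

namespace IncChain

section Membership

variable {X : Type v} {r : X → X → Prop}

instance : Membership X (IncChain X r) := ⟨fun A x => ∃ β hβ, A.val β hβ = x⟩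

instance : EmptyCollection (IncChain X r) :=
  ⟨⟨0, fun _ hβ => (not_lt_zero hβ).elim, fun _ _ hβ => (not_lt_zero hβ).elim⟩⟩

theorem val_mem (A : IncChain X r) {β : Ordinal.{v}} (hβ : β < A.len) : A.val β hβ ∈ A :=
  ⟨β, hβ, rfl⟩

theorem forall_mem_iff {A : IncChain X r} {p : X → Prop} :
    (∀ x ∈ A, p x) ↔ ∀ β hβ, p (A.val β hβ) :=
  ⟨fun h _ hβ => h _ (A.val_mem hβ), fun h _ ⟨β, hβ, hx⟩ => hx ▸ h β hβ⟩

end Membership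

section Preorder

variable {X : Type v} [Preorder X]

theorem val_lt_val (A : IncChain X (· ≤ ·)) {β γ : Ordinal.{v}} (hβ : β < A.len)
    (hγ : γ < A.len) (h : β < γ) : A.val β hβ < A.val γ hγ :=
  lt_iff_le_not_ge.2 (A.inc β γ hβ hγ h)

theorem val_le_val_iff (A : IncChain X (· ≤ ·)) {β γ : Ordinal.{v}} (hβ : β < A.len)
    (hγ : γ < A.len) : A.val β hβ ≤ A.val γ hγ ↔ β ≤ γ := by
  refine ⟨fun h => not_lt.1 fun hlt => (A.val_lt_val hγ hβ hlt).not_ge h, fun h => ?_⟩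
  rcases h.eq_or_lt with rfl | hlt
  · exact le_rfl
  · exact (A.val_lt_val hβ hγ hlt).le

theorem val_le_val (A : IncChain X (· ≤ ·)) {β γ : Ordinal.{v}} (hβ : β < A.len)
    (hγ : γ < A.len) (h : β ≤ γ) : A.val β hβ ≤ A.val γ hγ :=
  (A.val_le_val_iff hβ hγ).2 h

instance : Preorder (IncChain X (· ≤ ·)) where
  le := Le
  le_refl A β hβ := ⟨β, hβ, le_rfl⟩
  le_trans A B C hAB hBC β hβ := by
    obtain ⟨γ, hγ, h₁⟩ := hAB β hβ
    obtain ⟨ε, hε, h₂⟩ := hBC γ hγ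
    exact ⟨ε, hε, h₁.trans h₂⟩

theorem le_iff_forall_mem {A B : IncChain X (· ≤ ·)} : A ≤ B ↔ ∀ x ∈ A, ∃ y ∈ B, x ≤ y := by
  refine ⟨fun h => forall_mem_iff.2 fun β hβ => ?_, fun h β hβ => ?_⟩
  · obtain ⟨γ, hγ, hle⟩ := h β hβ
    exact ⟨_, B.val_mem hγ, hle⟩
  · obtain ⟨_, ⟨γ, hγ, rfl⟩, hle⟩ := h _ (A.val_mem hβ)
    exact ⟨γ, hγ, hle⟩

theorem le_of_len_eq_zero {A : IncChain X (· ≤ ·)} (h : A.len = 0) (B : IncChain X (· ≤ ·)) :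
    A ≤ B :=
  fun _ hβ => (not_lt_zero (h ▸ hβ)).elim

theorem exists_top_of_len_eq_succ (A : IncChain X (· ≤ ·)) {s : Ordinal.{v}}
    (h : A.len = succ s) : ∃ t ∈ A, ∀ x ∈ A, x ≤ t := by
  have hs : s < A.len := h ▸ lt_succ s
  exact ⟨_, A.val_mem hs, forall_mem_iff.2 fun β hβ =>
    A.val_le_val hβ hs (lt_succ_iff.1 (h ▸ hβ))⟩

theorem forall_mem_le_of_le {F G : IncChain X (· ≤ ·)} {y : X} (h : F ≤ G)
    (hG : ∀ x ∈ G, x ≤ y) : ∀ x ∈ F, x ≤ y := fun x hx =>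
  let ⟨_, hz, hxz⟩ := le_iff_forall_mem.1 h x hx
  hxz.trans (hG _ hz)

theorem Cofinal.le {A B : IncChain X (· ≤ ·)} (h : A.Cofinal B) : A ≤ B := fun β hβ =>
  let ⟨γ, hγ, hval⟩ := h.1 β hβ
  ⟨γ, hγ, hval.ge⟩

theorem Cofinal.ge {A B : IncChain X (· ≤ ·)} (h : A.Cofinal B) : B ≤ A := h.2

theorem exists_cofinal_len_eq_ord_cof (B : IncChain X (· ≤ ·)) :
    ∃ C : IncChain X (· ≤ ·), C.len = B.len.cof.ord ∧ C.Cofinal B := by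
  obtain ⟨f, hf⟩ := Ordinal.exists_isFundamentalSeq (o := B.len) rfl
  refine ⟨⟨_, fun i hi => B.val (f ⟨i, hi⟩) (f ⟨i, hi⟩).2,
    fun _ _ _ _ h => B.inc _ _ _ _ (hf.strictMono h)⟩, rfl, fun i hi => ⟨_, _, rfl⟩,
    fun β hβ => ?_⟩
  obtain ⟨_, ⟨i, rfl⟩, hi⟩ := hf.isCofinal_range ⟨β, hβ⟩
  exact ⟨i, i.2, B.val_le_val _ _ hi⟩

theorem ord_cof_len_le_of_cofinal {A B : IncChain X (· ≤ ·)} (h : A.Cofinal B) :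
    B.len.cof.ord ≤ A.len := by
  choose f hf hfA using h.1
  by_contra! hlt
  obtain ⟨γ, hγ, hfγ⟩ := Ordinal.exists_forall_lt_of_lift_card_lt_cof
    (by simpa using Cardinal.lt_ord.1 hlt) f hf
  obtain ⟨α, hα, hle⟩ := h.ge γ hγ
  rw [← hfA] at hle
  exact ((B.val_le_val_iff _ _).1 hle).not_gt (hfγ α hα)

theorem cof_eq (B : IncChain X (· ≤ ·)) : B.cof = B.len.cof.ord := by
  obtain ⟨C, hC, hCB⟩ := exists_cofinal_len_eq_ord_cof B
  refine le_antisymm (csInf_le' ⟨C, hC, hCB⟩) (le_csInf ⟨_, C, hC, hCB⟩ ?_)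
  rintro _ ⟨A, rfl, hA⟩
  exact ord_cof_len_le_of_cofinal hA

def subseq (F : IncChain X (· ≤ ·)) (e : Ordinal.{v} → Ordinal.{v})
    (he : ∀ j < F.len, e j < F.len) (hmono : StrictMonoOn e (Iio F.len)) :
    IncChain X (· ≤ ·) :=
  ⟨F.len, fun j hj => F.val (e j) (he j hj),
    fun _ _ hβ hγ h => lt_iff_le_not_ge.1 (F.val_lt_val _ _ (hmono hβ hγ h))⟩

theorem le_subseq (F : IncChain X (· ≤ ·)) {e : Ordinal.{v} → Ordinal.{v}}
    (he : ∀ j < F.len, e j < F.len) (hmono : StrictMonoOn e (Iio F.len)) :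
    F ≤ F.subseq e he hmono := fun j hj =>
  ⟨j, hj, F.val_le_val _ _ (by simpa using Ordinal.lift_le_of_strictMonoOn.{v, v} hmono hj)⟩

theorem exists_mem_forall_lt (C : IncChain X (· ≤ ·)) {o : Ordinal.{w}}
    (ho : Cardinal.lift.{v} o.card < Cardinal.lift.{w} C.len.cof) (x : ∀ β < o, X)
    (hx : ∀ β hβ, ∃ y ∈ C, x β hβ ≤ y) : ∃ y ∈ C, ∀ β hβ, x β hβ < y := by
  choose y hyC hxy using hx
  choose p hp hpy using hyC
  obtain ⟨γ, hγ, hpγ⟩ := Ordinal.exists_forall_lt_of_lift_card_lt_cof ho p hp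
  refine ⟨C.val γ hγ, C.val_mem hγ, fun β hβ => (hxy β hβ).trans_lt ?_⟩
  rw [← hpy β hβ]
  exact C.val_lt_val _ _ (hpγ β hβ)

theorem exists_mem_forall_lt_of_le (C : IncChain X (· ≤ ·)) (hC : C.len.cof.ord = C.len)
    {o : Ordinal.{w}} (ho : Ordinal.lift.{v} o < Ordinal.lift.{w} C.len)
    (A : ∀ i < o, IncChain X (· ≤ ·)) (hA : ∀ i hi, A i hi ≤ C) (m : ∀ i < o, Ordinal.{v})
    (hm : ∀ i hi, m i hi ≤ (A i hi).len) (hmC : ∀ i hi, m i hi < C.len) :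
    ∃ y ∈ C, ∀ i hi β hβ, β < m i hi → (A i hi).val β hβ < y := by
  have : ∀ i hi, ∃ y ∈ C, ∀ β (hβ : β < m i hi), (A i hi).val β (hβ.trans_le (hm i hi)) < y :=
    fun i hi => C.exists_mem_forall_lt
      (Ordinal.lift_card_lt_lift_cof_of_cof_ord_eq hC (Ordinal.lift_lt.2 (hmC i hi))) _
      fun β hβ => le_iff_forall_mem.1 (hA i hi) _ ((A i hi).val_mem _)
  choose y hyC hy using this
  obtain ⟨z, hz, hyz⟩ := C.exists_mem_forall_lt
    (Ordinal.lift_card_lt_lift_cof_of_cof_ord_eq hC ho) y fun i hi => ⟨_, hyC i hi, le_rfl⟩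
  exact ⟨z, hz, fun i hi β _ hβ => (hy i hi β hβ).trans (hyz i hi)⟩

theorem exists_incChain_of_strictMono {δ : Ordinal.{v + 1}} (b : ∀ γ < δ, X)
    (hb : ∀ β γ hβ hγ, β < γ → b β hβ < b γ hγ) :
    ∃ B : IncChain X (· ≤ ·), ∀ γ hγ, b γ hγ ∈ B := by
  have hinj : Function.Injective fun i : Iio δ => b i.1 i.2 :=
    StrictMono.injective fun i j h => hb _ _ _ _ h
  have hcard : δ.card ≤ Cardinal.lift.{v + 1} (Cardinal.mk X) := by
    rw [← Cardinal.lift_le.{v + 2, v + 1}]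
    simpa [Cardinal.mk_Iio_ordinal, Cardinal.lift_lift] using
      Cardinal.lift_mk_le_lift_mk_of_injective hinj
  obtain ⟨δ, rfl⟩ := Ordinal.mem_range_lift_of_card_le hcard
  refine ⟨⟨δ, fun j hj => b _ (Ordinal.lift_lt.2 hj),
    fun _ _ _ _ h => lt_iff_le_not_ge.1 (hb _ _ _ _ (Ordinal.lift_lt.2 h))⟩, fun γ hγ => ?_⟩
  obtain ⟨j, hj, rfl⟩ := Ordinal.lt_lift_iff.1 hγ
  exact ⟨j, hj, rfl⟩

end Preorder

section ChainsOfChains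

def ChainsBounded (X : Type v) [Preorder X] : Prop :=
  ∀ F : IncChain (IncChain X (· ≤ ·)) (· ≤ ·), ∃ B, ∀ γ hγ, F.val γ hγ ≤ B

def UniformChainsBounded (X : Type v) [Preorder X] : Prop :=
  ∀ (F : IncChain (IncChain X (· ≤ ·)) (· ≤ ·)) (α : Ordinal.{v}),
    (∀ γ hγ, (F.val γ hγ).len = α) → (∀ γ hγ, (F.val γ hγ).cof = α) → F.cof = F.len →
    Ordinal.lift.{v + 1} α ≠ F.len → 1 < α → 1 < F.len → ∃ B, ∀ γ hγ, F.val γ hγ ≤ B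

variable {X : Type v} [Preorder X]

theorem exists_le_forall_cof_ord_len_eq (F : IncChain (IncChain X (· ≤ ·)) (· ≤ ·)) :
    ∃ G : IncChain (IncChain X (· ≤ ·)) (· ≤ ·), G.len = F.len ∧ F ≤ G ∧
      ∀ γ hγ, (G.val γ hγ).len.cof.ord = (G.val γ hγ).len := by
  choose C hClen hCF using fun γ (hγ : γ < F.len) => exists_cofinal_len_eq_ord_cof (F.val γ hγ)
  refine ⟨⟨F.len, C, fun β γ hβ hγ h => lt_iff_le_not_ge.1 ?_⟩, rfl,
    fun γ hγ => ⟨γ, hγ, (hCF γ hγ).ge⟩, fun γ hγ => ?_⟩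
  · exact ((hCF β hβ).le.trans_lt (F.val_lt_val hβ hγ h)).trans_le (hCF γ hγ).ge
  · rw [hClen, Ordinal.cof_ord_cof]

theorem exists_forall_le_of_forall_exists_top (F : IncChain (IncChain X (· ≤ ·)) (· ≤ ·))
    (htop : ∀ γ hγ, ∃ t ∈ F.val γ hγ, ∀ x ∈ F.val γ hγ, x ≤ t) :
    ∃ B : IncChain X (· ≤ ·), ∀ A ∈ F, A ≤ B := by
  choose t ht htop using htop
  have hmono : ∀ β γ hβ hγ, β < γ → t β hβ < t γ hγ := by
    intro β γ hβ hγ h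
    have hlt := F.val_lt_val hβ hγ h
    obtain ⟨y, hy, hty⟩ := le_iff_forall_mem.1 hlt.le _ (ht β hβ)
    refine lt_of_le_not_ge (hty.trans (htop γ hγ y hy)) fun hle => hlt.not_ge ?_
    exact le_iff_forall_mem.2 fun x hx => ⟨_, ht β hβ, (htop γ hγ x hx).trans hle⟩
  obtain ⟨B, hB⟩ := exists_incChain_of_strictMono t hmono
  exact ⟨B, forall_mem_iff.2 fun γ hγ =>
    le_iff_forall_mem.2 fun x hx => ⟨_, hB γ hγ, htop γ hγ x hx⟩⟩

theorem exists_forall_le_of_len_strictMono (F : IncChain (IncChain X (· ≤ ·)) (· ≤ ·))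
    (hlim : IsSuccLimit F.len) (hreg : ∀ γ hγ, (F.val γ hγ).len.cof.ord = (F.val γ hγ).len)
    (hlen : ∀ β γ hβ hγ, β < γ → (F.val β hβ).len < (F.val γ hγ).len)
    (hlarge : ∀ γ hγ, γ < Ordinal.lift.{v + 1} (F.val γ hγ).len) :
    ∃ B : IncChain X (· ≤ ·), ∀ A ∈ F, A ≤ B := by
  have hsucc : ∀ j, j < F.len → succ j < F.len := fun _ hj => hlim.succ_lt hj
  have hb : ∀ j (hj : j < F.len), ∃ y ∈ F.val (succ j) (hsucc j hj),
      ∀ i (hij : i ≤ j) (hi : i < F.len), ∀ x ∈ F.val i hi, x < y := by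
    intro j hj
    obtain ⟨y, hy, hlt⟩ := exists_mem_forall_lt_of_le _ (hreg _ _) (o := succ j)
      ((Ordinal.lift_id'.{v, v + 1} _).trans_lt (hlarge _ (hsucc j hj)))
      (fun i hi => F.val i (hi.trans (hsucc j hj))) (fun i hi => F.val_le_val _ _ hi.le)
      (fun i hi => (F.val i _).len) (fun _ _ => le_rfl) fun i hi => hlen _ _ _ _ hi
    exact ⟨y, hy, fun i hij hi => forall_mem_iff.2 fun β hβ =>
      hlt i (lt_succ_of_le hij) β hβ hβ⟩
  choose b hbF hb using hb
  obtain ⟨B, hB⟩ := exists_incChain_of_strictMono b fun i j hi hj hij => by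
    obtain ⟨β, hβ, hbi⟩ := hbF i hi
    exact hb j hj _ (succ_le_of_lt hij) _ _ ⟨β, hβ, hbi⟩
  exact ⟨B, forall_mem_iff.2 fun γ hγ =>
    le_iff_forall_mem.2 fun x hx => ⟨_, hB γ hγ, (hb γ hγ γ le_rfl hγ x hx).le⟩⟩

theorem exists_forall_le_of_len_eq {κ : Ordinal.{v}} (hκ : κ.cof.ord = κ)
    (hlim : IsSuccLimit κ) (A : ∀ j < κ, IncChain X (· ≤ ·)) (hlen : ∀ j hj, (A j hj).len = κ)
    (hmono : ∀ i j hi hj, i ≤ j → A i hi ≤ A j hj) :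
    ∃ B : IncChain X (· ≤ ·), ∀ j hj, A j hj ≤ B := by
  -- The diagonal chain takes the element of `A j` at position `q j`, chosen strictly above the
  -- first `j` elements and the diagonal element of every earlier `A i`.
  obtain ⟨q, hq⟩ := Ordinal.exists_seq_of_forall_exists (α := Ordinal.{v}) (δ := κ)
    (fun j hj q p => ∃ hp : p < (A j hj).len, ∀ i (hij : i < j) β hβ,
      β < max j (succ (q i hij)) → (A i (hij.trans hj)).val β hβ < (A j hj).val p hp)
    fun j hj q hq => by
      have hqκ : ∀ i (hi : i < j), q i hi < κ := fun i hi => hlen i _ ▸ (hq i hi).1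
      obtain ⟨_, ⟨p, hp, rfl⟩, hy⟩ := exists_mem_forall_lt_of_le (A j hj)
        (by rw [hlen]; exact hκ) (o := j) (Ordinal.lift_lt.2 (by rw [hlen]; exact hj))
        (fun i hi => A i (hi.trans hj)) (fun i hi => hmono _ _ _ _ hi.le)
        (fun i hi => max j (succ (q i hi)))
        (fun i hi => by rw [hlen]; exact max_le hj.le (succ_le_of_lt (hqκ i hi)))
        (fun i hi => by rw [hlen]; exact max_lt hj (hlim.succ_lt (hqκ i hi)))
      exact ⟨p, hp, hy⟩
  refine ⟨⟨κ, fun j hj => (A j hj).val (q j) (hq j hj).1, fun i j hi hj hij =>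
    lt_iff_le_not_ge.1 ((hq j hj).2 i hij _ _ (lt_max_of_lt_right (lt_succ _)))⟩,
    fun γ hγ β hβ => ?_⟩
  have hj : succ (max γ β) < κ := hlim.succ_lt (max_lt hγ (hlen γ hγ ▸ hβ))
  exact ⟨_, hj, ((hq _ hj).2 γ (lt_succ_of_le (le_max_left _ _)) β hβ
    (lt_max_of_lt_left (lt_succ_of_le (le_max_right _ _)))).le⟩

theorem exists_forall_le_of_len_const (H : UniformChainsBounded X)
    (F : IncChain (IncChain X (· ≤ ·)) (· ≤ ·)) (hF : F.len.cof.ord = F.len)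
    (hlim : IsSuccLimit F.len) {κ : Ordinal.{v}} (hκ : κ.cof.ord = κ)
    (hlen : ∀ γ hγ, (F.val γ hγ).len = κ) : ∃ B : IncChain X (· ≤ ·), ∀ A ∈ F, A ≤ B := by
  have h1 : 1 < F.len := Ordinal.one_lt_of_isSuccLimit hlim
  rcases Ordinal.eq_zero_or_eq_one_or_isSuccLimit_of_cof_ord_eq hκ with rfl | rfl | hκlim
  · exact absurd (le_of_len_eq_zero (hlen 1 h1) _)
      (F.val_lt_val hlim.bot_lt h1 zero_lt_one).not_ge
  · exact exists_forall_le_of_forall_exists_top F fun γ hγ =>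
      exists_top_of_len_eq_succ _ ((hlen γ hγ).trans (by simp : (1 : Ordinal) = succ 0))
  by_cases hdiag : Ordinal.lift.{v + 1} κ = F.len
  · have hlt : ∀ j < κ, Ordinal.lift.{v + 1} j < F.len := fun j hj =>
      hdiag ▸ Ordinal.lift_lt.2 hj
    obtain ⟨B, hB⟩ := exists_forall_le_of_len_eq hκ hκlim (fun j hj => F.val _ (hlt j hj))
      (fun _ _ => hlen _ _) fun _ _ _ _ hij => F.val_le_val _ _ (Ordinal.lift_le.2 hij)
    refine ⟨B, forall_mem_iff.2 fun γ hγ => ?_⟩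
    obtain ⟨j, hj, rfl⟩ := Ordinal.lt_lift_iff.1 (hdiag ▸ hγ)
    exact hB j hj
  · obtain ⟨B, hB⟩ := H F κ hlen (fun γ hγ => by rw [cof_eq, hlen, hκ]) (by rw [cof_eq, hF])
      hdiag (Ordinal.one_lt_of_isSuccLimit hκlim) h1
    exact ⟨B, forall_mem_iff.2 hB⟩

theorem exists_forall_le_of_cof_ord_len_eq (H : UniformChainsBounded X)
    (F : IncChain (IncChain X (· ≤ ·)) (· ≤ ·)) (hF : F.len.cof.ord = F.len)
    (hlim : IsSuccLimit F.len) (hreg : ∀ γ hγ, (F.val γ hγ).len.cof.ord = (F.val γ hγ).len) :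
    ∃ B : IncChain X (· ≤ ·), ∀ A ∈ F, A ≤ B := by
  classical
  obtain ⟨e, he, hmono, hlens⟩ := Ordinal.exists_subseq_const_or_strictMonoOn hF hlim
    fun γ => if hγ : γ < F.len then (F.val γ hγ).len else 0
  suffices ∃ B : IncChain X (· ≤ ·), ∀ A ∈ F.subseq e he hmono, A ≤ B from
    let ⟨B, hB⟩ := this
    ⟨B, forall_mem_le_of_le (F.le_subseq he hmono) hB⟩
  have hval : ∀ j hj, (F.val (e j) (he j hj)).len =
      if hγ : e j < F.len then (F.val (e j) hγ).len else 0 := fun j hj => by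
    rw [dif_pos (he j hj)]
  rcases hlens with ⟨κ, hκ⟩ | ⟨hlen, hlarge⟩
  · have h0 : (0 : Ordinal) < F.len := hlim.bot_lt
    exact exists_forall_le_of_len_const H _ hF hlim (hκ 0 h0 ▸ hval 0 h0 ▸ hreg _ _)
      fun j hj => (hval j hj).trans (hκ j hj)
  · exact exists_forall_le_of_len_strictMono _ hlim (fun _ _ => hreg _ _)
      (fun i j hi hj hij => (hval i hi).trans_lt ((hlen hi hj hij).trans_eq (hval j hj).symm))
      fun j hj => (Ordinal.lift_id'.{v, v + 1} j).symm.trans_lt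
        ((hlarge j hj).trans_eq (congrArg _ (hval j hj).symm))

theorem chainsBounded_of_uniformChainsBounded (H : UniformChainsBounded X) :
    ChainsBounded X := by
  intro F
  suffices ∃ B : IncChain X (· ≤ ·), ∀ A ∈ F, A ≤ B from
    let ⟨B, hB⟩ := this
    ⟨B, forall_mem_iff.1 hB⟩
  rcases Ordinal.zero_or_succ_or_isSuccLimit F.len with h0 | ⟨s, hs⟩ | hlim
  · exact ⟨∅, forall_mem_iff.2 fun _ hγ => (not_lt_zero (h0 ▸ hγ)).elim⟩
  · obtain ⟨t, -, ht⟩ := exists_top_of_len_eq_succ F hs.symm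
    exact ⟨t, ht⟩
  obtain ⟨G, hGlen, hGF⟩ := exists_cofinal_len_eq_ord_cof F
  obtain ⟨G', hG'len, hGG', hreg⟩ := exists_le_forall_cof_ord_len_eq G
  rw [hGlen] at hG'len
  obtain ⟨B, hB⟩ := exists_forall_le_of_cof_ord_len_eq H G'
    (by rw [hG'len, Ordinal.cof_ord_cof])
    (hG'len ▸ Cardinal.isSuccLimit_ord
      (Ordinal.aleph0_le_cof_iff.2 (Ordinal.one_lt_cof_iff.2 hlim))) hreg
  exact ⟨B, forall_mem_le_of_le (hGF.ge.trans hGG') hB⟩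

end ChainsOfChains

end IncChain

/-- the following are equivalent for a quasi-ordered set `(X, ≼)`:
(1) every increasing chain of chains in `IC(X, ≼)` has an upper bound in `IC(X, ≼)`;
(2) every increasing chain of chains `((x^γ_β)_{β<α})_{γ<δ}` whose member chains are all
indexed by the same ordinal `α`, with `α ≠ δ`, `cof((x^γ_β)_{β<α}) = α > 1` for all `γ < δ`,
and `cof(((x^γ_β)_{β<α})_{γ<δ}) = δ > 1`, has an upper bound in `IC(X, ≼)`. -/
theorem stmt4 {X : Type u} {r : X → X → Prop}
    (hrefl : ∀ x, r x x) (htrans : ∀ a b c, r a b → r b c → r a c) :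
    (∀ F : IncChain (IncChain X r) IncChain.Le,
      ∃ B : IncChain X r, ∀ (γ : Ordinal.{u + 1}) (hγ : γ < F.len), (F.val γ hγ).Le B) ↔
    (∀ (F : IncChain (IncChain X r) IncChain.Le) (α : Ordinal.{u}),
      (∀ (γ : Ordinal.{u + 1}) (hγ : γ < F.len), (F.val γ hγ).len = α) →
      (∀ (γ : Ordinal.{u + 1}) (hγ : γ < F.len), (F.val γ hγ).cof = α) →
      F.cof = F.len →
      Ordinal.lift.{u + 1} α ≠ F.len →
      1 < α → 1 < F.len →
      ∃ B : IncChain X r, ∀ (γ : Ordinal.{u + 1}) (hγ : γ < F.len), (F.val γ hγ).Le B) := by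
  let _ : Preorder X := { le := r, le_refl := hrefl, le_trans := htrans }
  exact ⟨fun h F _ _ _ _ _ _ _ => h F, IncChain.chainsBounded_of_uniformChainsBounded⟩
end

section
/- Let X = ω₁ × ω be the set of pairs (ξ, n) with ξ an ordinal < ω₁ and n ∈ ℕ, partially ordered componentwise: (ξ, n) ≤ (ζ, m) iff ξ ≤ ζ and n ≤ m. Then X admits no cofinal chain, i.e., there is no totally ordered subset C ⊆ X such that every element of X is ≤ some element of C. Consequently, the increasing chain of chains in IC(X, ≤) given by x^γ_n = (γ, n) for γ < ω₁ and n < ω has no upper bound in IC(X, ≤). -/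
universe u

/-- The set of ordinals below `ω₁`, the first uncountable ordinal. -/
def OmegaOneBelow : Type 1 := {o : Ordinal.{0} // o < (Cardinal.aleph 1).ord}

/-- `X = ω₁ × ω`. -/
def OmegaOneTimesOmega : Type 1 := OmegaOneBelow × ℕ

/-- The componentwise partial order on `ω₁ × ω`. -/
def prodLe (a b : OmegaOneTimesOmega) : Prop := a.1.1 ≤ b.1.1 ∧ a.2 ≤ b.2

open Cardinal Ordinal Order

/-- Choose `c n ∈ C` above `(a, n + 1)` and `x` strictly above every `(c n).1`; an element
`d ∈ C` above `(x, 0)` is comparable with `c d.2`, and neither comparison is possible. -/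
theorem not_isCofinal_of_isChain_prod_nat {α : Type*} [Preorder α] [Nonempty α]
    (hα : ∀ f : ℕ → α, ∃ x, ∀ n, f n < x) {C : Set (α × ℕ)} (hC : IsChain (· ≤ ·) C) :
    ¬ IsCofinal C := by
  intro hcof
  choose c hcC hc using fun n : ℕ => hcof (Classical.arbitrary α, n + 1)
  obtain ⟨x, hx⟩ := hα fun n => (c n).1
  obtain ⟨d, hdC, hd⟩ := hcof (x, 0)
  rcases hC.total hdC (hcC d.2) with hdc | hcd
  · exact (hx d.2).not_ge (hd.1.trans hdc.1)
  · exact Nat.not_succ_le_self d.2 ((hc d.2).2.trans hcd.2)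

namespace IncChain

variable {X : Type u} {r : X → X → Prop}

def range (B : IncChain X r) : Set X := {x | ∃ β h, B.val β h = x}

theorem isChain_range (B : IncChain X r) : IsChain r B.range := by
  rintro _ ⟨β, hβ, rfl⟩ _ ⟨γ, hγ, rfl⟩ hne
  rcases lt_trichotomy β γ with h | rfl | h
  · exact .inl (B.inc β γ hβ hγ h).1
  · exact absurd rfl hne
  · exact .inr (B.inc γ β hγ hβ h).1

end IncChain

namespace OmegaOneBelow

noncomputable instance : LinearOrder OmegaOneBelow :=
  inferInstanceAs (LinearOrder {o : Ordinal.{0} // o < (aleph 1).ord})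

instance : Nonempty OmegaOneBelow := ⟨⟨0, ord_pos.2 (aleph_pos 1)⟩⟩

theorem exists_forall_lt (f : ℕ → OmegaOneBelow) : ∃ x, ∀ n, f n < x := by
  have hf (n : ℕ) : (f n).1 < ω₁ := ord_aleph 1 ▸ (f n).2
  have hsup : succ (⨆ n, (f n).1) < (aleph 1).ord :=
    ((isSuccLimit_omega 1).succ_lt (iSup_lt_omega_one hf)).trans_eq (ord_aleph 1).symm
  exact ⟨⟨_, hsup⟩, fun n => lt_succ_of_le (Ordinal.le_iSup (fun n => (f n).1) n)⟩

end OmegaOneBelow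

theorem OmegaOneTimesOmega.not_exists_chain_cofinal :
    ¬ ∃ C : Set OmegaOneTimesOmega, IsChain prodLe C ∧ ∀ x, ∃ c ∈ C, prodLe x c :=
  fun ⟨C, hC, hcof⟩ =>
    not_isCofinal_of_isChain_prod_nat OmegaOneBelow.exists_forall_lt
      (C := (C : Set (OmegaOneBelow × ℕ))) hC hcof

/-- `ω₁ × ω`, ordered componentwise, admits no cofinal chain; consequently the
increasing chain of chains given by `x^γ_n = (γ, n)` has no upper bound in `IC(ω₁ × ω, ≤)`. -/
theorem stmt6 :
    -- no cofinal chain: no totally ordered subset `C` dominating every element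
    (¬ ∃ C : Set OmegaOneTimesOmega,
        (∀ a ∈ C, ∀ b ∈ C, prodLe a b ∨ prodLe b a) ∧
        (∀ x : OmegaOneTimesOmega, ∃ c ∈ C, prodLe x c)) ∧
    -- each family `(x^γ_n)_{n<ω} = ((γ, n))_{n<ω}` is an increasing chain
    (∀ (γ : OmegaOneBelow) (n m : ℕ), n < m →
      prodLe (γ, n) (γ, m) ∧ ¬ prodLe (γ, m) (γ, n)) ∧
    -- and these chains form an increasing chain of chains of length `ω₁`
    (∀ γ γ' : OmegaOneBelow, γ.1 < γ'.1 →
      (∀ n : ℕ, ∃ m : ℕ, prodLe (γ, n) (γ', m)) ∧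
      ¬ (∀ n : ℕ, ∃ m : ℕ, prodLe (γ', n) (γ, m))) ∧
    -- which has no upper bound in `IC(ω₁ × ω, ≤)`
    ¬ ∃ B : IncChain OmegaOneTimesOmega prodLe,
        ∀ (γ : OmegaOneBelow) (n : ℕ),
          ∃ (β : Ordinal.{1}) (hβ : β < B.len), prodLe (γ, n) (B.val β hβ) := by
  refine ⟨fun ⟨C, hC, hcof⟩ => OmegaOneTimesOmega.not_exists_chain_cofinal
      ⟨C, fun a ha b hb _ => hC a ha b hb, hcof⟩, ?_, ?_, ?_⟩
  · exact fun γ n m hnm => ⟨⟨le_rfl, hnm.le⟩, fun h => hnm.not_ge h.2⟩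
  · intro γ γ' hγ
    refine ⟨fun n => ⟨n, hγ.le, le_rfl⟩, fun h => ?_⟩
    obtain ⟨m, hm⟩ := h 0
    exact hγ.not_ge hm.1
  · rintro ⟨B, hB⟩
    refine OmegaOneTimesOmega.not_exists_chain_cofinal ⟨B.range, B.isChain_range, ?_⟩
    rintro ⟨γ, n⟩
    obtain ⟨β, hβ, h⟩ := hB γ n
    exact ⟨B.val β hβ, ⟨β, hβ, rfl⟩, h⟩
end

section
/- Let X = ω₁ × ω (pairs (ξ, n) with ξ an ordinal < ω₁ and n ∈ ℕ) equipped with the quasi-order (ξ, n) ⪯ (ζ, m) iff (ξ, n) = (ζ, m), or (ξ ≤ ζ and n < m). Then every increasing chain in (X, ⪯) is indexed by a countable ordinal, yet the family of chains A_γ = ((γ, n))_{n<ω} for γ < ω₁ is an increasing chain of chains in IC(X, ⪯) of length ω₁ (i.e., γ < γ' < ω₁ implies A_γ ⊑ A_{γ'} and not A_{γ'} ⊑ A_γ). -/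
universe u

/-- The quasi-order `(ξ, n) ⪯ (ζ, m)` iff `(ξ, n) = (ζ, m)`, or (`ξ ≤ ζ` and `n < m`). -/
def mixedLe (a b : OmegaOneTimesOmega) : Prop := a = b ∨ (a.1.1 ≤ b.1.1 ∧ a.2 < b.2)

private theorem countlen (A_len : Ordinal.{1})
    (f : Set.Iio A_len → ℕ) (hf : Function.Injective f) : A_len.card ≤ Cardinal.aleph0 := by
  have h1 : Cardinal.mk (Set.Iio A_len) ≤ Cardinal.aleph0 := by
    calc Cardinal.mk (Set.Iio A_len) ≤ Cardinal.mk (ULift.{2} ℕ) :=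
          Cardinal.mk_le_of_injective (f := fun x => ULift.up (f x))
            (fun a b h => hf (congrArg ULift.down h))
      _ = Cardinal.aleph0 := by simp
  rw [Ordinal.mk_Iio_ordinal] at h1
  rwa [← Cardinal.lift_aleph0.{2,1}, Cardinal.lift_le] at h1
/-- in `(ω₁ × ω, ⪯)` every increasing chain is indexed by a countable ordinal,
yet the family `A_γ = ((γ, n))_{n<ω}`, `γ < ω₁`, is an increasing chain of chains of length
`ω₁` in `IC(ω₁ × ω, ⪯)`. -/
theorem stmt7 :
    -- every increasing chain in `(X, ⪯)` is indexed by a countable ordinal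
    (∀ A : IncChain OmegaOneTimesOmega mixedLe, A.len.card ≤ Cardinal.aleph0) ∧
    -- each family `A_γ = ((γ, n))_{n<ω}` is an increasing chain
    (∀ (γ : OmegaOneBelow) (n m : ℕ), n < m →
      mixedLe (γ, n) (γ, m) ∧ ¬ mixedLe (γ, m) (γ, n)) ∧
    -- and `γ < γ' < ω₁` implies `A_γ ⊑ A_{γ'}` and not `A_{γ'} ⊑ A_γ`
    (∀ γ γ' : OmegaOneBelow, γ.1 < γ'.1 →
      (∀ n : ℕ, ∃ m : ℕ, mixedLe (γ, n) (γ', m)) ∧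
      ¬ (∀ n : ℕ, ∃ m : ℕ, mixedLe (γ', n) (γ, m))) := by
  refine ⟨?_, ?_, ?_⟩
  · intro A
    have key : ∀ (β γ : Ordinal.{1}) (hβ : β < A.len) (hγ : γ < A.len), β < γ →
        (A.val β hβ).2 < (A.val γ hγ).2 := by
      intro β γ hβ hγ h
      obtain ⟨h1, h2⟩ := A.inc β γ hβ hγ h
      rcases h1 with heq | ⟨_, hn⟩
      · exact absurd (Or.inl heq.symm) h2
      · exact hn
    refine countlen A.len (fun x => (A.val x.1 x.2).2) ?_
    intro a b hab
    rcases lt_trichotomy (a : Ordinal) (b : Ordinal) with h | h | h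
    · exact absurd hab (ne_of_lt (key a b a.2 b.2 h))
    · exact Subtype.ext h
    · exact absurd hab.symm (ne_of_lt (key b a b.2 a.2 h))
  · intro γ n m hnm
    constructor
    · exact Or.inr ⟨le_rfl, hnm⟩
    · rintro (heq | ⟨_, hmn⟩)
      · have : m = n := congrArg Prod.snd heq
        omega
      · omega
  · intro γ γ' hγ
    constructor
    · intro n
      exact ⟨n + 1, Or.inr ⟨le_of_lt hγ, Nat.lt_succ_self n⟩⟩
    · intro h
      obtain ⟨m, hm⟩ := h 0
      rcases hm with heq | ⟨hle, _⟩
      · have : γ' = γ := congrArg Prod.fst heq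
        subst this
        exact lt_irrefl _ hγ
      · exact absurd hγ (not_lt_of_ge hle)
end

section
/- For every increasing chain (f_n)_{n<ω} of functions in ℕ → ℕ ordered pointwise (f ≤ g iff f(n) ≤ g(n) for all n, with f < g iff f ≤ g and f ≠ g) there exists a family (f^α_n) of functions ℕ → ℕ, indexed by α < ω₁ and n < ω, such that: for each α < ω₁, (f^α_n)_{n<ω} is an increasing chain in (ℕ → ℕ, ≤); for all α < β < ω₁, (f^α_n)_{n<ω} ⊑ (f^β_n)_{n<ω} and not (f^β_n)_{n<ω} ⊑ (f^α_n)_{n<ω}; and (f_n)_{n<ω} ⊑ (f^0_n)_{n<ω}. -/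
/-!
Choose, by transfinite recursion along `ω₁`, functions `g α : ℕ → ℕ`, everywhere positive, such
that for `β < α < ω₁` the function `g α` eventually exceeds every `f m + m • g β`; this is possible
because at a countable stage only countably many functions have to be dominated, and a diagonal
argument dominates any countable family. Then `f^α_n := f n + n • g α` works: positivity of `g β`
lets some multiple `M • g β` absorb `f^α_n` on the finitely many arguments where domination fails,
while `f^β_1 ≥ g β` eventually exceeds every `f^α_m`.
-/

open Filter Set

lemma exists_pos_eventually_gt {ι : Type*} [Countable ι] (h : ι → ℕ → ℕ) :
    ∃ G : ℕ → ℕ, (∀ k, 0 < G k) ∧ ∀ i, ∀ᶠ k in atTop, h i k < G k := by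
  cases isEmpty_or_nonempty ι
  · exact ⟨1, fun _ => Nat.one_pos, isEmptyElim⟩
  obtain ⟨e, he⟩ := exists_surjective_nat ι
  refine ⟨fun k => (Finset.range (k + 1)).sup (fun j => h (e j) k) + 1,
    fun _ => Nat.succ_pos _, fun i => ?_⟩
  obtain ⟨j, rfl⟩ := he i
  filter_upwards [eventually_ge_atTop j] with k hk
  exact Nat.lt_succ_of_le
    (Finset.le_sup (f := fun j => h (e j) k) (Finset.mem_range.mpr (Nat.lt_succ_of_le hk)))

lemma countable_Iio_of_lt_ord_aleph_one {α : Ordinal.{0}} (hα : α < (Cardinal.aleph 1).ord) :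
    (Iio α).Countable := by
  rw [← Cardinal.le_aleph0_iff_set_countable, Cardinal.mk_Iio_ordinal, Cardinal.lift_le_aleph0,
    ← Cardinal.lt_aleph_one_iff]
  exact Cardinal.lt_ord.mp hα

section TransfiniteDominating

variable {ι : Type*} [Countable ι] (T : (ℕ → ℕ) → ι → ℕ → ℕ)

open Classical in
/-- At stages `α` with `Iio α` uncountable the value is the junk function `1`. -/
noncomputable def transfiniteDominating : Ordinal.{0} → ℕ → ℕ :=
  Ordinal.lt_wf.fix fun α g =>
    if hα : (Iio α).Countable then
      haveI := hα.to_subtype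
      Classical.choose (exists_pos_eventually_gt fun p : Iio α × ι => T (g p.1 p.1.2) p.2)
    else 1

open Classical in
lemma transfiniteDominating_eq (α : Ordinal.{0}) :
    transfiniteDominating T α =
      if hα : (Iio α).Countable then
        haveI := hα.to_subtype
        Classical.choose (exists_pos_eventually_gt
          fun p : Iio α × ι => T (transfiniteDominating T p.1) p.2)
      else 1 := by
  rw [transfiniteDominating, WellFounded.fix_eq]

lemma transfiniteDominating_spec {α : Ordinal.{0}} (hα : (Iio α).Countable) :
    (∀ k, 0 < transfiniteDominating T α k) ∧ ∀ β < α, ∀ i,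
      ∀ᶠ k in atTop, T (transfiniteDominating T β) i k < transfiniteDominating T α k := by
  have := hα.to_subtype
  obtain ⟨hpos, hlt⟩ := Classical.choose_spec (exists_pos_eventually_gt
    fun p : Iio α × ι => T (transfiniteDominating T p.1) p.2)
  rw [transfiniteDominating_eq, dif_pos hα]
  exact ⟨hpos, fun β hβ i => hlt (⟨β, hβ⟩, i)⟩

lemma transfiniteDominating_pos (α : Ordinal.{0}) (k : ℕ) : 0 < transfiniteDominating T α k := by
  by_cases hα : (Iio α).Countable
  · exact (transfiniteDominating_spec T hα).1 k
  · rw [transfiniteDominating_eq, dif_neg hα]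
    exact Nat.one_pos

lemma eventually_lt_transfiniteDominating {α β : Ordinal.{0}} (hβα : β < α)
    (hα : α < (Cardinal.aleph 1).ord) (i : ι) :
    ∀ᶠ k in atTop, T (transfiniteDominating T β) i k < transfiniteDominating T α k :=
  (transfiniteDominating_spec T (countable_Iio_of_lt_ord_aleph_one hα)).2 β hβα i

end TransfiniteDominating

lemma exists_le_nsmul_of_eventually_lt {h G : ℕ → ℕ} (hG : ∀ k, 0 < G k)
    (hev : ∀ᶠ k in atTop, h k < G k) : ∃ M : ℕ, h ≤ M • G := by
  obtain ⟨N, hN⟩ := eventually_atTop.mp hev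
  set B := (Finset.range N).sup h
  refine ⟨B + 1, fun k => ?_⟩
  rw [Pi.smul_apply, smul_eq_mul]
  rcases lt_or_ge k N with hk | hk
  · calc h k ≤ B := Finset.le_sup (Finset.mem_range.mpr hk)
      _ ≤ (B + 1) * G k := by nlinarith [hG k]
  · calc h k ≤ G k := (hN k hk).le
      _ ≤ (B + 1) * G k := Nat.le_mul_of_pos_left _ B.succ_pos

/-- for every increasing chain `(f_n)_{n<ω}` in `(ℕ → ℕ, ≤)` (pointwise order,
with `f < g` iff `f ≤ g` and `f ≠ g`) there exists a family `(f^α_n)` indexed by `α < ω₁` and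
`n < ω` such that each `(f^α_n)_{n<ω}` is an increasing chain, `α < β < ω₁` implies
`(f^α_n)_{n<ω} ⊑ (f^β_n)_{n<ω}` and not conversely, and `(f_n)_{n<ω} ⊑ (f^0_n)_{n<ω}`. -/
theorem stmt8 (f : ℕ → ℕ → ℕ) (hf : ∀ n m : ℕ, n < m → f n < f m) :
    ∃ F : (α : Ordinal.{0}) → α < (Cardinal.aleph 1).ord → ℕ → ℕ → ℕ,
      -- each `(f^α_n)_{n<ω}` is an increasing chain in `(ℕ → ℕ, ≤)`
      (∀ (α : Ordinal.{0}) (hα : α < (Cardinal.aleph 1).ord) (n m : ℕ), n < m →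
        F α hα n < F α hα m) ∧
      -- `α < β` implies `(f^α_n)_{n<ω} ⊑ (f^β_n)_{n<ω}` and not `(f^β_n)_{n<ω} ⊑ (f^α_n)_{n<ω}`
      (∀ (α β : Ordinal.{0}) (hα : α < (Cardinal.aleph 1).ord)
          (hβ : β < (Cardinal.aleph 1).ord), α < β →
        (∀ n : ℕ, ∃ m : ℕ, F α hα n ≤ F β hβ m) ∧
        ¬ (∀ n : ℕ, ∃ m : ℕ, F β hβ n ≤ F α hα m)) ∧
      -- `(f_n)_{n<ω} ⊑ (f^0_n)_{n<ω}`
      (∀ h0 : (0 : Ordinal.{0}) < (Cardinal.aleph 1).ord,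
        ∀ n : ℕ, ∃ m : ℕ, f n ≤ F 0 h0 m) := by
  set T : (ℕ → ℕ) → ℕ → ℕ → ℕ := fun g m => f m + m • g
  set g := transfiniteDominating T
  refine ⟨fun α _ n => f n + n • g α, ?_, fun α β _ hβ hαβ => ⟨fun n => ?_, ?_⟩,
    fun _ n => ⟨n, le_self_add⟩⟩
  · intro α _ n m hnm
    exact add_lt_add_of_lt_of_le (hf n m hnm) (nsmul_le_nsmul_left zero_le hnm.le)
  · obtain ⟨M, hM⟩ := exists_le_nsmul_of_eventually_lt (transfiniteDominating_pos T β)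
      (eventually_lt_transfiniteDominating T hαβ hβ n)
    exact ⟨M, hM.trans le_add_self⟩
  · intro hcon
    obtain ⟨m, hm⟩ := hcon 1
    obtain ⟨k, hk⟩ := (eventually_lt_transfiniteDominating T hαβ hβ m).exists
    exact (hm k).not_gt (hk.trans_le (by simp only [one_smul, Pi.add_apply]; exact le_add_self))
end

section
/- Let (X, ≼) be a countable quasi-ordered set. Then every increasing chain in (X, ≼) is maximal in (IC(X, ≼), ⊑) or is ⊑-below a maximal increasing chain. -/
/-!
Identify a chain `C` with its down-set `↓C = {x | ∃ γ, x ≼ C γ}`, so that `A ⊑ B` becomes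
`↓A ⊆ ↓B`. Down-sets of chains are directed and downward closed; conversely, when `X` is countable,
every directed downward closed set `U` is a down-set: enumerate `U` as a `≼`-increasing cofinal
sequence, which either has a largest term (a chain of length `1`) or contains a strictly increasing
cofinal subsequence (a chain of length `ω`). Hence the union of the down-sets along a `⊑`-chain of
chains is again a down-set, which gives upper bounds, and Zorn's lemma yields a maximal chain
above any given one.
-/

universe u

theorem DirectedOn.exists_monotone_seq_cofinal {X : Type*} {r : X → X → Prop} [Countable X]
    [Std.Refl r] [IsTrans X r] {U : Set X} (hne : U.Nonempty) (hdir : DirectedOn r U) :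
    ∃ g : ℕ → X, (∀ n, g n ∈ U) ∧ (∀ m n, m ≤ n → r (g m) (g n)) ∧ ∀ x ∈ U, ∃ n, r x (g n) := by
  obtain ⟨x₀, hx₀⟩ := hne
  have : Inhabited U := ⟨⟨x₀, hx₀⟩⟩
  have : Encodable U := Encodable.ofCountable U
  have hd := directedOn_iff_directed.mp hdir
  exact ⟨fun n => (hd.sequence Subtype.val n).1, fun n => (hd.sequence Subtype.val n).2,
    fun _ _ hmn => Nat.rel_of_forall_rel_succ_of_le r hd.sequence_mono_nat hmn,
    fun x hx => ⟨_, hd.rel_sequence ⟨x, hx⟩⟩⟩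

theorem exists_strictMono_subseq_not_rel {X : Type*} {r : X → X → Prop} [IsTrans X r]
    {g : ℕ → X} (hg : ∀ m n, m ≤ n → r (g m) (g n)) (hunbdd : ∀ N, ∃ m, ¬ r (g m) (g N)) :
    ∃ φ : ℕ → ℕ, StrictMono φ ∧ ∀ m n, m < n → ¬ r (g (φ n)) (g (φ m)) := by
  choose next hnext using hunbdd
  have hlt : ∀ N, N < next N := fun N => lt_of_not_ge fun h => hnext N (hg _ _ h)
  have hφ : StrictMono fun k => next^[k] 0 :=
    strictMono_nat_of_lt_succ fun k => by
      simpa only [Function.iterate_succ_apply'] using hlt _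
  refine ⟨_, hφ, fun m n hmn hrel => hnext (next^[m] 0) ?_⟩
  rw [← Function.iterate_succ_apply' next]
  exact _root_.trans (hg _ _ (hφ.monotone hmn)) hrel

namespace IncChain

variable {X : Type u} {r : X → X → Prop}

def downSet (C : IncChain X r) : Set X :=
  {x | ∃ (γ : Ordinal.{u}) (hγ : γ < C.len), r x (C.val γ hγ)}

theorem le_iff_downSet_subset [Std.Refl r] [IsTrans X r] {A B : IncChain X r} :
    A.Le B ↔ A.downSet ⊆ B.downSet := by
  constructor
  · rintro h x ⟨β, hβ, hx⟩
    obtain ⟨γ, hγ, hle⟩ := h β hβ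
    exact ⟨γ, hγ, _root_.trans hx hle⟩
  · exact fun h β hβ => h ⟨β, hβ, refl _⟩

protected theorem Le.trans [IsTrans X r] {A B C : IncChain X r} (hAB : A.Le B)
    (hBC : B.Le C) : A.Le C := fun β hβ =>
  let ⟨γ, hγ, h⟩ := hAB β hβ
  let ⟨δ, hδ, h'⟩ := hBC γ hγ
  ⟨δ, hδ, _root_.trans h h'⟩

theorem mem_downSet_of_rel [IsTrans X r] {C : IncChain X r} {x y : X} (hxy : r x y)
    (hy : y ∈ C.downSet) : x ∈ C.downSet :=
  let ⟨γ, hγ, h⟩ := hy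
  ⟨γ, hγ, _root_.trans hxy h⟩

theorem directedOn_downSet [Std.Refl r] [IsTrans X r] (C : IncChain X r) :
    DirectedOn r C.downSet := by
  rintro x ⟨β, hβ, hx⟩ y ⟨γ, hγ, hy⟩
  rcases lt_or_ge β γ with hβγ | hγβ
  · exact ⟨_, ⟨γ, hγ, refl _⟩, _root_.trans hx (C.inc β γ hβ hγ hβγ).1, hy⟩
  · refine ⟨_, ⟨β, hβ, refl _⟩, hx, _root_.trans hy ?_⟩
    rcases hγβ.lt_or_eq with hγβ | rfl
    · exact (C.inc γ β hγ hβ hγβ).1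
    · exact refl _

def empty : IncChain X r where
  len := 0
  val _ hβ := absurd hβ not_lt_zero
  inc _ _ hβ := absurd hβ not_lt_zero

theorem downSet_empty : (empty : IncChain X r).downSet = ∅ :=
  Set.eq_empty_of_forall_notMem fun _ ⟨_, hγ, _⟩ => not_lt_zero hγ

def single (x : X) : IncChain X r where
  len := 1
  val _ _ := x
  inc _ _ _ hγ hβγ := absurd (Order.lt_one_iff.mp hγ ▸ hβγ) not_lt_zero

theorem downSet_single (x : X) : (single x : IncChain X r).downSet = {y | r y x} :=
  Set.ext fun _ => ⟨fun ⟨_, _, h⟩ => h, fun h => ⟨0, zero_lt_one, h⟩⟩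

noncomputable def ofNat (f : ℕ → X) (hf : ∀ m n, m < n → r (f m) (f n) ∧ ¬ r (f n) (f m)) :
    IncChain X r where
  len := Ordinal.omega0
  val β hβ := f (Ordinal.lt_omega0.mp hβ).choose
  inc β γ hβ hγ hβγ := by
    apply hf
    rwa [(Ordinal.lt_omega0.mp hβ).choose_spec, (Ordinal.lt_omega0.mp hγ).choose_spec,
      Nat.cast_lt] at hβγ

theorem ofNat_val {f : ℕ → X} {hf : ∀ m n, m < n → r (f m) (f n) ∧ ¬ r (f n) (f m)} (n : ℕ)
    (hn : (n : Ordinal.{u}) < Ordinal.omega0) : (ofNat f hf).val n hn = f n :=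
  congrArg f (Nat.cast_injective (Ordinal.lt_omega0.mp hn).choose_spec).symm

theorem downSet_ofNat {f : ℕ → X} {hf : ∀ m n, m < n → r (f m) (f n) ∧ ¬ r (f n) (f m)} :
    (ofNat f hf).downSet = {y | ∃ n, r y (f n)} := by
  ext y
  constructor
  · rintro ⟨_, _, hy⟩
    exact ⟨_, hy⟩
  · rintro ⟨n, hy⟩
    exact ⟨n, Ordinal.natCast_lt_omega0 n, (ofNat_val n _).symm ▸ hy⟩

theorem exists_downSet_eq_of_monotone [IsTrans X r] {g : ℕ → X}
    (hg : ∀ m n, m ≤ n → r (g m) (g n)) :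
    ∃ C : IncChain X r, C.downSet = {x | ∃ n, r x (g n)} := by
  by_cases htop : ∃ N, ∀ m, r (g m) (g N)
  · obtain ⟨N, hN⟩ := htop
    refine ⟨single (g N), (downSet_single _).trans (Set.ext fun x => ?_)⟩
    exact ⟨fun h => ⟨N, h⟩, fun ⟨n, h⟩ => _root_.trans h (hN n)⟩
  · push Not at htop
    obtain ⟨φ, hφ, hnot⟩ := exists_strictMono_subseq_not_rel hg htop
    refine ⟨ofNat (g ∘ φ) fun m n h => ⟨hg _ _ (hφ h).le, hnot m n h⟩,
      downSet_ofNat.trans (Set.ext fun x => ?_)⟩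
    exact ⟨fun ⟨n, h⟩ => ⟨φ n, h⟩, fun ⟨n, h⟩ => ⟨n, _root_.trans h (hg _ _ hφ.le_apply)⟩⟩

theorem exists_downSet_eq [Countable X] [Std.Refl r] [IsTrans X r] {U : Set X}
    (hdown : ∀ x y, r x y → y ∈ U → x ∈ U) (hdir : DirectedOn r U) :
    ∃ C : IncChain X r, C.downSet = U := by
  rcases U.eq_empty_or_nonempty with rfl | hne
  · exact ⟨empty, downSet_empty⟩
  obtain ⟨g, hgU, hg, hcof⟩ := hdir.exists_monotone_seq_cofinal hne
  obtain ⟨C, hC⟩ := exists_downSet_eq_of_monotone hg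
  refine ⟨C, hC.trans (Set.Subset.antisymm ?_ hcof)⟩
  rintro x ⟨n, hx⟩
  exact hdown _ _ hx (hgU n)

theorem exists_le_of_isChain [Countable X] [Std.Refl r] [IsTrans X r] (A : IncChain X r)
    {c : Set (IncChain X r)} (hc : IsChain Le c) (hAc : ∀ B ∈ c, A.Le B) :
    ∃ C : IncChain X r, A.Le C ∧ ∀ B ∈ c, B.Le C := by
  set S := insert A.downSet (downSet '' c)
  have hS : IsChain (· ⊆ ·) S := by
    refine (hc.image_of_map_rel Le (· ⊆ ·) downSet fun _ _ => le_iff_downSet_subset.mp).insert ?_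
    rintro _ ⟨B, hB, rfl⟩ -
    exact Or.inl (le_iff_downSet_subset.mp (hAc B hB))
  have hdir : DirectedOn r (⋃₀ S) := by
    refine Set.directedOn_sUnion hS.directedOn ?_
    rintro s (rfl | ⟨B, -, rfl⟩) <;> exact directedOn_downSet _
  have hdown : ∀ x y, r x y → y ∈ ⋃₀ S → x ∈ ⋃₀ S := by
    rintro x y hxy ⟨s, hs, hy⟩
    refine ⟨s, hs, ?_⟩
    rcases hs with rfl | ⟨B, -, rfl⟩ <;> exact mem_downSet_of_rel hxy hy
  obtain ⟨C, hC⟩ := exists_downSet_eq hdown hdir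
  refine ⟨C, le_iff_downSet_subset.mpr ?_, fun B hB => le_iff_downSet_subset.mpr ?_⟩
  · exact hC ▸ Set.subset_sUnion_of_mem (Set.mem_insert _ _)
  · exact hC ▸ Set.subset_sUnion_of_mem (Set.mem_insert_of_mem _ ⟨B, hB, rfl⟩)

end IncChain

open IncChain in
/-- if `(X, ≼)` is a countable quasi-ordered set, then every increasing chain
in `(X, ≼)` is maximal in `(IC(X, ≼), ⊑)` or is `⊑`-below a maximal increasing chain. -/
theorem stmt11 {X : Type u} {r : X → X → Prop} [Countable X]
    (hrefl : ∀ x, r x x) (htrans : ∀ a b c, r a b → r b c → r a c)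
    (A : IncChain X r) :
    A.Maximal ∨ ∃ B : IncChain X r, B.Maximal ∧ A.Le B := by
  have : Std.Refl r := ⟨hrefl⟩
  have : IsTrans X r := ⟨htrans⟩
  obtain ⟨⟨B, hAB⟩, hB⟩ := exists_maximal_of_chains_bounded
    (r := fun B C : {B : IncChain X r // A.Le B} => B.1.Le C.1)
    (fun c hc => by
      obtain ⟨C, hAC, hC⟩ := exists_le_of_isChain A
        (hc.image_of_map_rel _ _ Subtype.val fun _ _ h => h) (by rintro _ ⟨B, -, rfl⟩; exact B.2)
      exact ⟨⟨C, hAC⟩, fun B hB => hC B ⟨B, hB, rfl⟩⟩)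
    Le.trans
  exact Or.inr ⟨B, fun C hBC => hB ⟨C, hAB.trans hBC⟩ hBC, hAB⟩
end

section
/- Let σ₁ and σ₂ be protagonist strategies in an initialized generalised safety/reachability game. Then σ₁ is not weakly dominated by σ₂ (i.e., not σ₁ ⪯ σ₂) if and only if there exists a history h, compatible with both σ₁ and σ₂, such that last(h) ∈ V_P, σ₁(h) ≠ σ₂(h), and cVal(h, σ₁) > aVal(h, σ₂). -/
open scoped Classical

/-- A generalised safety/reachability game: a finite directed graph where every vertex has a
successor, a set `protag` of protagonist vertices (the rest belong to the antagonist), a set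
`leaf` of leaves (each equipped with exactly a self-loop), an integer payoff attached to each
leaf, and an initial vertex `v0`. -/
structure GSRGame where
  V : Type
  fin : Finite V
  E : V → V → Prop
  succ_exists : ∀ v : V, ∃ w : V, E v w
  protag : V → Prop
  leaf : V → Prop
  leaf_loop : ∀ v w : V, leaf v → (E v w ↔ w = v)
  pay : V → ℤ
  v0 : V

namespace GSRGame

variable (g : GSRGame)

/-- A strategy: to each nonempty history it assigns a successor of the last vertex.
(A protagonist strategy is only ever consulted at histories ending in a protagonist vertex,
an antagonist strategy at histories ending in an antagonist vertex.) -/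
structure Strat where
  act : List g.V → g.V
  valid : ∀ (h : List g.V) (hne : h ≠ []), g.E (h.getLast hne) (act h)

/-- One step of the play extending history `h`: the protagonist moves according to `σ` at
protagonist vertices, the antagonist according to `τ` elsewhere. -/
noncomputable def step (σ τ : g.Strat) (h : List g.V) : List g.V :=
  h ++ [if g.protag (h.getLastD g.v0) then σ.act h else τ.act h]

/-- The history obtained after `k` steps of play by `(σ, τ)` extending `h`. -/
noncomputable def playList (σ τ : g.Strat) (h : List g.V) : ℕ → List g.V
  | 0 => h
  | k + 1 => g.step σ τ (playList σ τ h k)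

/-- The outcome (infinite path) induced by `(σ, τ)` from the history `h`. -/
noncomputable def play (σ τ : g.Strat) (h : List g.V) (k : ℕ) : g.V :=
  (g.playList σ τ h k).getLastD g.v0

/-- The payoff of an outcome: the payoff of the leaf it reaches, and `0` if it reaches
no leaf. -/
noncomputable def payoffOf (ρ : ℕ → g.V) : ℤ :=
  if hx : ∃ k : ℕ, g.leaf (ρ k) then g.pay (ρ (Nat.find hx)) else 0

/-- The payoff `p(h, σ, τ)` of the outcome induced by `(σ, τ)` from the history `h`. -/
noncomputable def pval (σ τ : g.Strat) (h : List g.V) : ℤ :=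
  g.payoffOf (g.play σ τ h)

/-- `h` is a history (a nonempty path starting at `v0`) compatible with the protagonist
strategy `σ`: every protagonist move along `h` agrees with `σ`. -/
def Compat (σ : g.Strat) (h : List g.V) : Prop :=
  h ≠ [] ∧ h.head? = some g.v0 ∧ List.Chain' g.E h ∧
    ∀ (p : List g.V) (v : g.V), (p ++ [v]) <+: h → p ≠ [] →
      g.protag (p.getLastD g.v0) → σ.act p = v

/-- The cooperative value `cVal(h, σ)`. -/
noncomputable def cVal (σ : g.Strat) (h : List g.V) : ℤ :=
  sSup {z : ℤ | ∃ τ : g.Strat, z = g.pval σ τ h}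

/-- The antagonistic value `aVal(h, σ)`. -/
noncomputable def aVal (σ : g.Strat) (h : List g.V) : ℤ :=
  sInf {z : ℤ | ∃ τ : g.Strat, z = g.pval σ τ h}

/-- The antagonistic value `aVal(h)` of a history. -/
noncomputable def aValH (h : List g.V) : ℤ :=
  sSup {z : ℤ | ∃ σ : g.Strat, z = g.aVal σ h}

/-- The antagonistic-cooperative value `acVal(h)` of a history. -/
noncomputable def acVal (h : List g.V) : ℤ :=
  sSup {z : ℤ | ∃ σ : g.Strat, g.aValH h ≤ g.aVal σ h ∧ z = g.cVal σ h}

/-- Weak dominance `σ ⪯ σ'` (from the initial vertex `v0`). -/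
def Dom (σ σ' : g.Strat) : Prop :=
  ∀ τ : g.Strat, g.pval σ τ [g.v0] ≤ g.pval σ' τ [g.v0]

/-- Dominance `σ ≺ σ'`. -/
def SDom (σ σ' : g.Strat) : Prop :=
  g.Dom σ σ' ∧ ∃ τ : g.Strat, g.pval σ τ [g.v0] < g.pval σ' τ [g.v0]

/-- Admissibility: `σ` is dominated by no strategy. -/
def Admissible (σ : g.Strat) : Prop := ¬ ∃ σ' : g.Strat, g.SDom σ σ'

/-- `h` is a witness of non-dominance of `σ₁` by `σ₂`. -/
def NonDomWitness (σ₁ σ₂ : g.Strat) (h : List g.V) : Prop :=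
  g.Compat σ₁ h ∧ g.Compat σ₂ h ∧ g.protag (h.getLastD g.v0) ∧
    σ₁.act h ≠ σ₂.act h ∧ g.aVal σ₂ h < g.cVal σ₁ h

/-- `h` is a witness of non-admissibility of `σ`. -/
def NonAdmWitness (σ : g.Strat) (h : List g.V) : Prop :=
  g.Compat σ h ∧
    g.aVal σ h ≤ g.cVal σ h ∧ g.cVal σ h ≤ g.aValH h ∧ g.aValH h ≤ g.acVal h ∧
    (g.aVal σ h < g.cVal σ h ∨ g.cVal σ h < g.aValH h ∨ g.aValH h < g.acVal h)

end GSRGame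

/-!
If some antagonist strategy `τ` gives `σ₁` a better payoff than `σ₂`, the plays of `σ₁` and
`σ₂` against `τ` coincide up to a first history `h` at which the two protagonist strategies
choose differently; then `aVal(h, σ₂) ≤ p(σ₂, τ) < p(σ₁, τ) ≤ cVal(h, σ₁)`, because the payoff
of a play does not change when its start is moved along it.

Conversely, both values at such an `h` are attained, since payoffs range over a finite set.
The antagonist walks along `h`, then cooperates with `σ₁` on histories extending `h σ₁(h)` and
plays the `aVal`-optimal strategy against `σ₂` elsewhere; as `σ₁(h) ≠ σ₂(h)`, the two
continuations never interfere, so this single strategy witnesses `p(σ₂, τ) < p(σ₁, τ)`.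
-/

theorem List.getLastD_eq_getLast {α : Type*} {l : List α} (d : α) (hl : l ≠ []) :
    l.getLastD d = l.getLast hl := by
  simp [List.getLast?_eq_some_getLast hl]

theorem List.isChain_append_singleton_iff {α : Type*} {R : α → α → Prop} {l : List α} {a : α}
    (hl : l ≠ []) : List.IsChain R (l ++ [a]) ↔ List.IsChain R l ∧ R (l.getLast hl) a := by
  simp [List.isChain_append, List.getLast?_eq_some_getLast hl]

theorem List.eq_of_append_singleton_prefix {α : Type*} {l t : List α} {a b : α}
    (ha : l ++ [a] <+: t) (hb : l ++ [b] <+: t) : a = b := by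
  simpa using (List.prefix_of_prefix_length_le ha hb (by simp)).eq_of_length (by simp)

namespace GSRGame

variable {g : GSRGame}

def LeafAbsorbing (ρ : ℕ → g.V) : Prop :=
  ∀ k, g.leaf (ρ k) → ρ (k + 1) = ρ k

namespace LeafAbsorbing

variable {ρ : ℕ → g.V}

theorem eq_of_le (hρ : LeafAbsorbing ρ) {k m : ℕ} (hk : g.leaf (ρ k)) (hkm : k ≤ m) :
    ρ m = ρ k := by
  induction m, hkm using Nat.le_induction with
  | base => rfl
  | succ m _ ih => rw [hρ m (ih ▸ hk), ih]

theorem payoffOf_eq_pay (hρ : LeafAbsorbing ρ) {k : ℕ} (hk : g.leaf (ρ k)) :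
    g.payoffOf ρ = g.pay (ρ k) := by
  have hex : ∃ k, g.leaf (ρ k) := ⟨k, hk⟩
  rw [payoffOf, dif_pos hex, hρ.eq_of_le (Nat.find_spec hex) (Nat.find_le hk)]

theorem payoffOf_shift (hρ : LeafAbsorbing ρ) (n : ℕ) :
    g.payoffOf (fun k => ρ (n + k)) = g.payoffOf ρ := by
  by_cases hex : ∃ k, g.leaf (ρ (n + k))
  · obtain ⟨k, hk⟩ := hex
    exact (payoffOf_eq_pay (fun j => hρ (n + j)) hk).trans (hρ.payoffOf_eq_pay hk).symm
  · have hnone : ¬ ∃ k, g.leaf (ρ k) := fun ⟨m, hm⟩ =>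
      hex ⟨m, by rwa [Nat.add_comm, hρ.eq_of_le hm (Nat.le_add_right m n)]⟩
    rw [payoffOf, payoffOf, dif_neg hex, dif_neg hnone]

end LeafAbsorbing

section Play

variable (σ τ : g.Strat)

theorem playList_succ (h : List g.V) (k : ℕ) :
    g.playList σ τ h (k + 1) = g.step σ τ (g.playList σ τ h k) := rfl

theorem playList_add (h : List g.V) (n k : ℕ) :
    g.playList σ τ h (n + k) = g.playList σ τ (g.playList σ τ h n) k := by
  induction k with
  | zero => rfl
  | succ k ih => rw [← Nat.add_assoc, playList_succ, playList_succ, ih]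

theorem prefix_playList (h : List g.V) (k : ℕ) : h <+: g.playList σ τ h k := by
  induction k with
  | zero => exact List.prefix_refl h
  | succ k ih => exact ih.trans (List.prefix_append _ _)

theorem step_of_protag {h : List g.V} (hp : g.protag (h.getLastD g.v0)) :
    g.step σ τ h = h ++ [σ.act h] := by
  rw [step, if_pos hp]

theorem step_of_not_protag {h : List g.V} (hp : ¬ g.protag (h.getLastD g.v0)) :
    g.step σ τ h = h ++ [τ.act h] := by
  rw [step, if_neg hp]

theorem edge_step {h : List g.V} (hne : h ≠ []) :
    g.E (h.getLast hne) ((g.step σ τ h).getLastD g.v0) := by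
  rw [step, List.getLastD_concat]
  split
  · exact σ.valid h hne
  · exact τ.valid h hne

theorem leafAbsorbing_play {h : List g.V} (hne : h ≠ []) : LeafAbsorbing (g.play σ τ h) := by
  intro k hk
  have hne' : g.playList σ τ h k ≠ [] := (prefix_playList σ τ h k).ne_nil hne
  have hedge := edge_step σ τ hne'
  rw [← List.getLastD_eq_getLast g.v0] at hedge
  exact (g.leaf_loop _ _ hk).1 hedge

theorem pval_playList {h : List g.V} (hne : h ≠ []) (n : ℕ) :
    g.pval σ τ (g.playList σ τ h n) = g.pval σ τ h := by
  have hshift : g.play σ τ (g.playList σ τ h n) = fun k => g.play σ τ h (n + k) := by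
    funext k
    rw [play, play, playList_add]
  rw [pval, pval, hshift, (leafAbsorbing_play σ τ hne).payoffOf_shift]

theorem playList_congr_right {τ' : g.Strat} {h : List g.V}
    (hτ : ∀ l, h <+: l → τ.act l = τ'.act l) (k : ℕ) :
    g.playList σ τ h k = g.playList σ τ' h k := by
  induction k with
  | zero => rfl
  | succ k ih =>
    rw [playList_succ, playList_succ, ← ih, step, step, hτ _ (prefix_playList σ τ h k)]

theorem pval_congr_right {τ' : g.Strat} {h : List g.V} (hne : h ≠ [])
    (hp : g.protag (h.getLastD g.v0)) (hτ : ∀ l, h ++ [σ.act h] <+: l → τ.act l = τ'.act l) :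
    g.pval σ τ h = g.pval σ τ' h := by
  have hfirst : ∀ τ : g.Strat, g.playList σ τ h 1 = h ++ [σ.act h] :=
    fun τ => step_of_protag σ τ hp
  rw [← pval_playList σ τ hne 1, ← pval_playList σ τ' hne 1, hfirst, hfirst, pval, pval]
  unfold play
  simp only [playList_congr_right σ τ hτ]

theorem Compat.ne_nil {σ : g.Strat} {h : List g.V} (hσ : g.Compat σ h) : h ≠ [] := hσ.1

theorem compat_singleton : g.Compat σ [g.v0] := by
  refine ⟨List.cons_ne_nil _ _, rfl, List.isChain_singleton _, fun p v hpv hp _ => ?_⟩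
  have := hpv.length_le
  simp_all

theorem Compat.step {σ : g.Strat} {h : List g.V} (hσ : g.Compat σ h) :
    g.Compat σ (g.step σ τ h) := by
  obtain ⟨hne, hhead, hchain, hmoves⟩ := hσ
  refine ⟨by simp [GSRGame.step], by rwa [GSRGame.step, List.head?_append_of_ne_nil _ hne],
    (List.isChain_append_singleton_iff hne).2 ⟨hchain, ?_⟩, fun p v hpv hp hprot => ?_⟩
  · simpa [GSRGame.step] using edge_step σ τ hne
  rcases List.prefix_concat_iff.1 hpv with heq | hpre
  · obtain ⟨rfl, -⟩ := List.append_inj' heq rfl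
    rw [if_pos hprot, List.append_cancel_left_eq, List.singleton_inj] at heq
    exact heq.symm
  · exact hmoves p v hpre hp hprot

theorem compat_playList (k : ℕ) : g.Compat σ (g.playList σ τ [g.v0] k) := by
  induction k with
  | zero => exact compat_singleton σ
  | succ k ih => exact ih.step τ

theorem Compat.edge {σ : g.Strat} {h p : List g.V} {v : g.V} (hσ : g.Compat σ h)
    (hpv : p ++ [v] <+: h) (hp : p ≠ []) : g.E (p.getLastD g.v0) v := by
  rw [List.getLastD_eq_getLast _ hp]
  exact ((List.isChain_append_singleton_iff hp).1 (hσ.2.2.1.prefix hpv)).2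

theorem exists_playList_eq {h : List g.V} (hσ : g.Compat σ h)
    (hτ : ∀ p v, p ++ [v] <+: h → p ≠ [] → ¬ g.protag (p.getLastD g.v0) → τ.act p = v) :
    ∃ k, g.playList σ τ [g.v0] k = h := by
  obtain ⟨hne₀, hhead, -, hmoves⟩ := hσ
  suffices ∀ h', h' <+: h → h' ≠ [] → ∃ k, g.playList σ τ [g.v0] k = h' from
    this h (List.prefix_refl h) hne₀
  intro h' hpre hne
  induction h' using List.reverseRecOn with
  | nil => exact absurd rfl hne
  | append_singleton p v ih =>
    rcases eq_or_ne p [] with rfl | hp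
    · obtain ⟨t, rfl⟩ := hpre
      have hv : v = g.v0 := by simpa using hhead
      exact ⟨0, by rw [hv]; rfl⟩
    · obtain ⟨k, hk⟩ := ih ((List.prefix_append p [v]).trans hpre) hp
      refine ⟨k + 1, ?_⟩
      rw [playList_succ, hk]
      by_cases hprot : g.protag (p.getLastD g.v0)
      · rw [step_of_protag σ τ hprot, hmoves p v hpre hp hprot]
      · rw [step_of_not_protag σ τ hprot, hτ p v hpre hp hprot]

theorem exists_branch_of_pval_ne {σ₁ σ₂ : g.Strat} {h : List g.V}
    (hne : g.pval σ₁ τ h ≠ g.pval σ₂ τ h) :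
    ∃ n, g.playList σ₁ τ h n = g.playList σ₂ τ h n ∧
      g.protag ((g.playList σ₁ τ h n).getLastD g.v0) ∧
      σ₁.act (g.playList σ₁ τ h n) ≠ σ₂.act (g.playList σ₁ τ h n) := by
  by_contra! hcon
  have hsame : ∀ n, g.playList σ₁ τ h n = g.playList σ₂ τ h n := by
    intro n
    induction n with
    | zero => rfl
    | succ n ih =>
      rw [playList_succ, playList_succ, ← ih]
      by_cases hp : g.protag ((g.playList σ₁ τ h n).getLastD g.v0)
      · rw [step_of_protag σ₁ τ hp, step_of_protag σ₂ τ hp, hcon n ih hp]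
      · rw [step_of_not_protag σ₁ τ hp, step_of_not_protag σ₂ τ hp]
  apply hne
  unfold pval play
  simp only [hsame]

end Play

instance : Nonempty g.Strat := by
  choose next hnext using g.succ_exists
  exact ⟨⟨fun l => next (l.getLastD g.v0), fun l hl => by
    rw [← List.getLastD_eq_getLast g.v0 hl]
    exact hnext _⟩⟩

section Values

variable (σ : g.Strat) (h : List g.V)

theorem finite_pvals : {z : ℤ | ∃ τ : g.Strat, z = g.pval σ τ h}.Finite := by
  have := g.fin
  refine ((Set.finite_range g.pay).insert 0).subset ?_
  rintro z ⟨τ, rfl⟩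
  unfold pval payoffOf
  split
  · exact Set.mem_insert_of_mem _ ⟨_, rfl⟩
  · exact Set.mem_insert _ _

theorem nonempty_pvals : {z : ℤ | ∃ τ : g.Strat, z = g.pval σ τ h}.Nonempty :=
  ⟨_, Classical.arbitrary g.Strat, rfl⟩

theorem exists_pval_eq_cVal : ∃ τ, g.pval σ τ h = g.cVal σ h := by
  obtain ⟨τ, hτ⟩ := (nonempty_pvals σ h).csSup_mem (finite_pvals σ h)
  exact ⟨τ, hτ.symm⟩

theorem exists_pval_eq_aVal : ∃ τ, g.pval σ τ h = g.aVal σ h := by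
  obtain ⟨τ, hτ⟩ := (nonempty_pvals σ h).csInf_mem (finite_pvals σ h)
  exact ⟨τ, hτ.symm⟩

theorem pval_le_cVal (τ : g.Strat) : g.pval σ τ h ≤ g.cVal σ h :=
  le_csSup (finite_pvals σ h).bddAbove ⟨τ, rfl⟩

theorem aVal_le_pval (τ : g.Strat) : g.aVal σ h ≤ g.pval σ τ h :=
  csInf_le (finite_pvals σ h).bddBelow ⟨τ, rfl⟩

end Values

namespace Strat

noncomputable def switch (A : List g.V) (τ₁ τ₂ : g.Strat) : g.Strat where
  act l := if A <+: l then τ₁.act l else τ₂.act l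
  valid l hl := by
    split
    · exact τ₁.valid l hl
    · exact τ₂.valid l hl

-- Asking for the edge in the condition makes the chosen move legal for every `h`.
noncomputable def follow (h : List g.V) (τ : g.Strat) : g.Strat where
  act l := if hv : ∃ v, l ++ [v] <+: h ∧ g.E (l.getLastD g.v0) v then hv.choose else τ.act l
  valid l hl := by
    split
    · next hv =>
      rw [← List.getLastD_eq_getLast g.v0 hl]
      exact hv.choose_spec.2
    · exact τ.valid l hl

variable {A h l : List g.V} {τ₁ τ₂ τ : g.Strat}

theorem switch_act_of_prefix (hl : A <+: l) : (switch A τ₁ τ₂).act l = τ₁.act l :=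
  if_pos hl

theorem switch_act_of_not_prefix (hl : ¬ A <+: l) : (switch A τ₁ τ₂).act l = τ₂.act l :=
  if_neg hl

theorem follow_act_of_prefix {v : g.V} (hv : l ++ [v] <+: h) (he : g.E (l.getLastD g.v0) v) :
    (follow h τ).act l = v := by
  have hex : ∃ v, l ++ [v] <+: h ∧ g.E (l.getLastD g.v0) v := ⟨v, hv, he⟩
  exact (dif_pos hex).trans (List.eq_of_append_singleton_prefix hex.choose_spec.1 hv)

theorem follow_act_of_length_le (hl : h.length ≤ l.length) : (follow h τ).act l = τ.act l := by
  refine dif_neg fun ⟨v, hv, _⟩ => ?_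
  have := hv.length_le
  simp only [List.length_append, List.length_singleton] at this
  omega

end Strat

open Strat in
theorem exists_strat_pval_eq_of_branch {σ₁ σ₂ : g.Strat} {h : List g.V} (hσ₁ : g.Compat σ₁ h)
    (hσ₂ : g.Compat σ₂ h) (hp : g.protag (h.getLastD g.v0)) (hact : σ₁.act h ≠ σ₂.act h)
    (τ₁ τ₂ : g.Strat) :
    ∃ τ, g.pval σ₁ τ [g.v0] = g.pval σ₁ τ₁ h ∧ g.pval σ₂ τ [g.v0] = g.pval σ₂ τ₂ h := by
  set τ := switch (h ++ [σ₁.act h]) τ₁ (follow h τ₂)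
  have hτ : ∀ p v, p ++ [v] <+: h → p ≠ [] → τ.act p = v := fun p v hpv hp' => by
    have hshort : ¬ h ++ [σ₁.act h] <+: p := fun hA => by
      have := hA.length_le.trans (List.prefix_append p [v]).length_le |>.trans hpv.length_le
      simp at this
    rw [switch_act_of_not_prefix hshort, follow_act_of_prefix hpv (hσ₁.edge hpv hp')]
  have hstart : ∀ σ, g.Compat σ h → g.pval σ τ [g.v0] = g.pval σ τ h := fun σ hσ => by
    obtain ⟨k, hk⟩ := exists_playList_eq σ τ hσ fun p v hpv hp' _ => hτ p v hpv hp'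
    rw [← hk, pval_playList σ τ (List.cons_ne_nil _ _)]
  refine ⟨τ, (hstart σ₁ hσ₁).trans (pval_congr_right σ₁ τ hσ₁.ne_nil hp fun l hl => ?_),
    (hstart σ₂ hσ₂).trans (pval_congr_right σ₂ τ hσ₂.ne_nil hp fun l hl => ?_)⟩
  · exact switch_act_of_prefix hl
  · have hlong : h.length ≤ l.length := by
      have := hl.length_le
      simp only [List.length_append, List.length_singleton] at this
      omega
    rw [switch_act_of_not_prefix fun hA => hact (List.eq_of_append_singleton_prefix hA hl),
      follow_act_of_length_le hlong]

end GSRGame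

open GSRGame

/-- `σ₁` is not weakly dominated by `σ₂` iff there is a history `h` compatible
with both, ending in a protagonist vertex, where they disagree and
`cVal(h, σ₁) > aVal(h, σ₂)`. -/
theorem stmt12 (g : GSRGame) (σ₁ σ₂ : g.Strat) :
    ¬ g.Dom σ₁ σ₂ ↔
      ∃ h : List g.V, g.Compat σ₁ h ∧ g.Compat σ₂ h ∧
        g.protag (h.getLastD g.v0) ∧ σ₁.act h ≠ σ₂.act h ∧
        g.aVal σ₂ h < g.cVal σ₁ h := by
  constructor
  · intro hndom
    obtain ⟨τ, hτ⟩ : ∃ τ, g.pval σ₂ τ [g.v0] < g.pval σ₁ τ [g.v0] := by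
      simpa [Dom] using hndom
    obtain ⟨n, hsame, hp, hact⟩ := exists_branch_of_pval_ne τ hτ.ne'
    have hv₀ := List.cons_ne_nil g.v0 []
    refine ⟨_, compat_playList σ₁ τ n, hsame ▸ compat_playList σ₂ τ n, hp, hact, ?_⟩
    calc g.aVal σ₂ (g.playList σ₁ τ [g.v0] n)
        ≤ g.pval σ₂ τ (g.playList σ₂ τ [g.v0] n) := hsame ▸ aVal_le_pval _ _ τ
      _ = g.pval σ₂ τ [g.v0] := pval_playList σ₂ τ hv₀ n
      _ < g.pval σ₁ τ [g.v0] := hτ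
      _ = g.pval σ₁ τ (g.playList σ₁ τ [g.v0] n) := (pval_playList σ₁ τ hv₀ n).symm
      _ ≤ g.cVal σ₁ (g.playList σ₁ τ [g.v0] n) := pval_le_cVal _ _ τ
  · rintro ⟨h, hσ₁, hσ₂, hp, hact, hval⟩ hdom
    obtain ⟨τc, hτc⟩ := exists_pval_eq_cVal σ₁ h
    obtain ⟨τa, hτa⟩ := exists_pval_eq_aVal σ₂ h
    obtain ⟨τ, h₁, h₂⟩ := exists_strat_pval_eq_of_branch hσ₁ hσ₂ hp hact τc τa
    have := hdom τ
    omega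
end

section
/- Let σ and τ be protagonist strategies in an initialized generalised safety/reachability game and let h be a history. If h is not a witness of non-admissibility of σ, and h is not a witness of non-dominance of σ by τ, then h is not a witness of non-dominance of τ by σ. -/
open scoped Classical

/-! If `h` witnessed that `τ` is not dominated by `σ` while not witnessing the converse, then
`aVal(h, σ) < cVal(h, τ)` and `cVal(h, σ) ≤ aVal(h, τ)`. The second inequality gives
`cVal(h, σ) ≤ aVal(h)`, and the chain `aVal(h, σ) ≤ cVal(h, σ) ≤ aVal(h) ≤ acVal(h)`, which
always holds, cannot be strict anywhere since `h` does not witness non-admissibility of `σ`.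
So all four values coincide; in particular `τ` is worst-case optimal at `h`, whence
`cVal(h, τ) ≤ acVal(h) = aVal(h, σ)`, a contradiction. All the suprema and infima involved are
attained, since payoffs range over the finite set of leaf payoffs and `0`. -/

theorem Set.finite_setOf_exists_eq {α β : Type*} {f : α → β} {S : Set β} (hS : S.Finite)
    (hf : ∀ x, f x ∈ S) : {z | ∃ x, z = f x}.Finite :=
  hS.subset (by rintro _ ⟨x, rfl⟩; exact hf x)

namespace GSRGame

variable (g : GSRGame)

instance inst_s15 : Nonempty g.Strat :=
  ⟨{ act := fun h => if hne : h ≠ [] then (g.succ_exists (h.getLast hne)).choose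
        else (g.succ_exists g.v0).choose
     valid := fun h hne => by
       rw [dif_pos hne]
       exact (g.succ_exists _).choose_spec }⟩

def payoffs : Set ℤ := insert 0 (Set.range g.pay)

theorem payoffs_finite : Set.Finite g.payoffs :=
  haveI := g.fin
  (Set.finite_range g.pay).insert 0

theorem payoffOf_mem_payoffs (ρ : ℕ → g.V) : g.payoffOf ρ ∈ g.payoffs := by
  unfold payoffOf
  split
  · exact Set.mem_insert_of_mem _ ⟨_, rfl⟩
  · exact Set.mem_insert _ _

variable (σ : g.Strat) (h : List g.V)

theorem pvalSet_finite : {z | ∃ τ, z = g.pval σ τ h}.Finite :=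
  Set.finite_setOf_exists_eq g.payoffs_finite fun _ => g.payoffOf_mem_payoffs _

theorem pvalSet_nonempty : {z | ∃ τ, z = g.pval σ τ h}.Nonempty :=
  let τ := Classical.arbitrary g.Strat
  ⟨g.pval σ τ h, τ, rfl⟩

theorem aVal_le_cVal : g.aVal σ h ≤ g.cVal σ h :=
  csInf_le_csSup (g.pvalSet_nonempty σ h) (g.pvalSet_finite σ h).bddBelow
    (g.pvalSet_finite σ h).bddAbove

theorem aVal_mem_payoffs : g.aVal σ h ∈ g.payoffs := by
  obtain ⟨τ, hτ⟩ := (g.pvalSet_nonempty σ h).csInf_mem (g.pvalSet_finite σ h)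
  rw [aVal, hτ]
  exact g.payoffOf_mem_payoffs _

theorem cVal_mem_payoffs : g.cVal σ h ∈ g.payoffs := by
  obtain ⟨τ, hτ⟩ := (g.pvalSet_nonempty σ h).csSup_mem (g.pvalSet_finite σ h)
  rw [cVal, hτ]
  exact g.payoffOf_mem_payoffs _

theorem aValSet_finite : {z | ∃ σ, z = g.aVal σ h}.Finite :=
  Set.finite_setOf_exists_eq g.payoffs_finite (g.aVal_mem_payoffs · h)

theorem aVal_le_aValH : g.aVal σ h ≤ g.aValH h :=
  le_csSup (g.aValSet_finite h).bddAbove ⟨σ, rfl⟩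

theorem cVal_le_acVal (hσ : g.aValH h ≤ g.aVal σ h) : g.cVal σ h ≤ g.acVal h := by
  refine le_csSup (g.payoffs_finite.subset ?_).bddAbove ⟨σ, hσ, rfl⟩
  rintro _ ⟨σ', -, rfl⟩
  exact g.cVal_mem_payoffs σ' h

theorem exists_aVal_eq_aValH : ∃ σ : g.Strat, g.aVal σ h = g.aValH h := by
  let σ₀ := Classical.arbitrary g.Strat
  obtain ⟨σ, hσ⟩ := Set.Nonempty.csSup_mem (s := {z | ∃ σ, z = g.aVal σ h}) ⟨_, σ₀, rfl⟩
    (g.aValSet_finite h)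
  exact ⟨σ, hσ.symm⟩

theorem aValH_le_acVal : g.aValH h ≤ g.acVal h := by
  obtain ⟨σ, hσ⟩ := g.exists_aVal_eq_aValH h
  calc g.aValH h = g.aVal σ h := hσ.symm
    _ ≤ g.cVal σ h := g.aVal_le_cVal σ h
    _ ≤ g.acVal h := g.cVal_le_acVal σ h hσ.ge

theorem acVal_le_aVal_of_not_nonAdmWitness (hc : g.Compat σ h) (hn : ¬ g.NonAdmWitness σ h)
    (hσ : g.cVal σ h ≤ g.aValH h) : g.acVal h ≤ g.aVal σ h := by
  have hac := g.aVal_le_cVal σ h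
  have hH := g.aValH_le_acVal h
  by_contra! hlt
  refine hn ⟨hc, hac, hσ, hH, ?_⟩
  omega

end GSRGame

/-- if `h` is not a witness of non-admissibility of `σ` and not a witness of
non-dominance of `σ` by `τ`, then `h` is not a witness of non-dominance of `τ` by `σ`. -/
theorem stmt15 (g : GSRGame) (σ τ : g.Strat) (h : List g.V)
    (h1 : ¬ g.NonAdmWitness σ h) (h2 : ¬ g.NonDomWitness σ τ h) :
    ¬ g.NonDomWitness τ σ h := by
  rintro ⟨cτ, cσ, prot, hne, hlt⟩
  have hστ : g.cVal σ h ≤ g.aVal τ h :=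
    not_lt.1 fun h' => h2 ⟨cσ, cτ, prot, hne.symm, h'⟩
  have hσ : g.acVal h ≤ g.aVal σ h :=
    g.acVal_le_aVal_of_not_nonAdmWitness σ h cσ h1 (hστ.trans (g.aVal_le_aValH τ h))
  have hτ : g.aValH h ≤ g.aVal τ h :=
    ((g.aValH_le_acVal h).trans hσ).trans ((g.aVal_le_cVal σ h).trans hστ)
  exact ((g.cVal_le_acVal τ h hτ).trans hσ).not_gt hlt
end
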